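/- arXiv:1502.00382 — 9 statements merged into one kernel-verified Lean document; each statement's English description precedes it below -/
import Mathlib

section
/- Let M, N be symmetric involutory real weight matrices of sizes m×m and n×n respectively. For every real m×n matrix A there exists a real n×m matrix X satisfying A∘X∘A = A, X∘A∘X = X, (A∘X)^[*] = A∘X, (X∘A)^[*] = X∘A (with respect to the indefinite matrix product and adjoint induced by M and N), and this X is unique; it is denoted A^[†], the indefinite Moore–Penrose inverse of A. -/
open Matrix

/-- Pseudoinverse of a real symmetric matrix via the spectral theorem. -/
private lemma symm_pinv_exists {n : ℕ} (S : Matrix (Fin n) (Fin n) ℝ) (hS : S.IsHermitian) :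
    ∃ G : Matrix (Fin n) (Fin n) ℝ,
      S * G * S = S ∧ G * S * G = G ∧ Gᵀ = G ∧ S * G = G * S := by
  set U : Matrix (Fin n) (Fin n) ℝ := (hS.eigenvectorUnitary : Matrix (Fin n) (Fin n) ℝ)
    with hU
  have hU1 : star U * U = 1 := hS.eigenvectorUnitary.2.1
  set d : Fin n → ℝ := hS.eigenvalues with hd
  set d' : Fin n → ℝ := fun i => if d i = 0 then 0 else (d i)⁻¹ with hd'
  have hspec : S = U * diagonal d * star U := by
    simpa using hS.spectral_theorem
  have cancel : ∀ (Z : Matrix (Fin n) (Fin n) ℝ), star U * (U * Z) = Z := by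
    intro Z; rw [← Matrix.mul_assoc, hU1, Matrix.one_mul]
  have key : ∀ e f : Fin n → ℝ,
      (U * diagonal e * star U) * (U * diagonal f * star U)
        = U * diagonal (fun i => e i * f i) * star U := by
    intro e f
    simp only [Matrix.mul_assoc, cancel]
    rw [← Matrix.mul_assoc (diagonal e) (diagonal f), Matrix.diagonal_mul_diagonal]
  refine ⟨U * diagonal d' * star U, ?_, ?_, ?_, ?_⟩
  · rw [hspec, key, key]
    have : (fun i => (fun i => d i * d' i) i * d i) = d := by
      funext i
      by_cases h : d i = 0 <;> simp [hd', h]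
    rw [this]
  · rw [hspec, key, key]
    have : (fun i => (fun i => d' i * d i) i * d' i) = d' := by
      funext i
      by_cases h : d i = 0 <;> simp [hd', h]
    rw [this]
  · have hstar : star U = Uᵀ := by
      rw [Matrix.star_eq_conjTranspose]; simp
    rw [hstar, Matrix.transpose_mul, Matrix.transpose_mul, Matrix.transpose_transpose,
      Matrix.diagonal_transpose, Matrix.mul_assoc]
  · rw [hspec, key, key]
    have : (fun i => d i * d' i) = fun i => d' i * d i := by funext i; ring
    rw [this]

/-- Existence and uniqueness of the ordinary Moore–Penrose inverse of a real matrix. -/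
private lemma mp_exists_unique {m n : ℕ} (A : Matrix (Fin m) (Fin n) ℝ) :
    ∃! X : Matrix (Fin n) (Fin m) ℝ,
      A * X * A = A ∧ X * A * X = X ∧ (A * X)ᵀ = A * X ∧ (X * A)ᵀ = X * A := by
  have hSh : (Aᵀ * A).IsHermitian := by
    have := Matrix.isHermitian_conjTranspose_mul_self A
    simpa using this
  set S := Aᵀ * A with hSdef
  have hSsymm : Sᵀ = S := by simpa using hSh.eq
  obtain ⟨G, hG1, hG2, hG3, hG4⟩ := symm_pinv_exists S hSh
  have fold : ∀ (Z : Matrix (Fin n) (Fin n) ℝ), Aᵀ * (A * Z) = S * Z := by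
    intro Z; rw [hSdef, Matrix.mul_assoc]
  have hAGS : A * (G * S) = A := by
    have hzero : (A - A * (G * S))ᵀ * (A - A * (G * S)) = 0 := by
      have hSGS : S * (G * S) = S := by rw [← Matrix.mul_assoc, hG1]
      have hGSt : (G * S)ᵀ = S * G := by rw [Matrix.transpose_mul, hG3, hSsymm]
      have expand : (A - A * (G * S))ᵀ * (A - A * (G * S))
          = S - S * (G * S) - (G * S)ᵀ * S + (G * S)ᵀ * (S * (G * S)) := by
        rw [Matrix.transpose_sub, Matrix.sub_mul, Matrix.mul_sub, Matrix.mul_sub]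
        rw [Matrix.transpose_mul]
        simp only [Matrix.mul_assoc, fold, ← hSdef]
        simp only [← Matrix.mul_assoc]
        abel
      rw [expand, hSGS, hGSt]
      abel
    have hz : A - A * (G * S) = 0 :=
      Matrix.conjTranspose_mul_self_eq_zero.mp (by simpa using hzero)
    exact (sub_eq_zero.mp hz).symm
  set X := G * Aᵀ with hXdef
  have hX1 : A * X * A = A := by
    calc A * X * A = A * (G * S) := by rw [hXdef, hSdef]; simp only [Matrix.mul_assoc]
      _ = A := hAGS
  have hX2 : X * A * X = X := by
    calc X * A * X = G * S * G * Aᵀ := by rw [hXdef, hSdef]; simp only [Matrix.mul_assoc]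
      _ = X := by rw [hG2, hXdef]
  have hX3 : (A * X)ᵀ = A * X := by
    rw [hXdef, Matrix.transpose_mul, Matrix.transpose_mul, Matrix.transpose_transpose, hG3,
      Matrix.mul_assoc]
  have hX4 : (X * A)ᵀ = X * A := by
    have h1 : X * A = G * S := by rw [hXdef, hSdef, Matrix.mul_assoc]
    rw [h1, Matrix.transpose_mul, hG3, hSsymm, hG4]
  refine ⟨X, ⟨hX1, hX2, hX3, hX4⟩, ?_⟩
  rintro Y ⟨hY1, hY2, hY3, hY4⟩
  have hAX : A * Y = A * X := by
    calc A * Y = (A * X * A) * Y := by rw [hX1]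
      _ = (A * X) * (A * Y) := by simp only [Matrix.mul_assoc]
      _ = (A * X)ᵀ * (A * Y)ᵀ := by rw [hX3, hY3]
      _ = Xᵀ * (A * Y * A)ᵀ := by
          simp only [Matrix.transpose_mul, Matrix.mul_assoc]
      _ = Xᵀ * Aᵀ := by rw [hY1]
      _ = (A * X)ᵀ := (Matrix.transpose_mul _ _).symm
      _ = A * X := hX3
  have hXA : Y * A = X * A := by
    calc Y * A = Y * (A * X * A) := by rw [hX1]
      _ = (Y * A) * (X * A) := by simp only [Matrix.mul_assoc]
      _ = (Y * A)ᵀ * (X * A)ᵀ := by rw [hX4, hY4]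
      _ = (A * Y * A)ᵀ * Xᵀ := by
          simp only [Matrix.transpose_mul, Matrix.mul_assoc]
      _ = Aᵀ * Xᵀ := by rw [hY1]
      _ = (X * A)ᵀ := (Matrix.transpose_mul _ _).symm
      _ = X * A := hX4
  calc Y = Y * A * Y := hY2.symm
    _ = X * A * Y := by rw [hXA]
    _ = X * (A * Y) := Matrix.mul_assoc X A Y
    _ = X * (A * X) := by rw [hAX]
    _ = X * A * X := (Matrix.mul_assoc X A X).symm
    _ = X := hX2

/-- Existence and uniqueness of the indefinite Moore–Penrose inverse `A^[†]` of a real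
`m × n` matrix `A`, with respect to the indefinite matrix product `A ∘ B = A W B`
(weight `W = N` or `M` for the intermediate space) and adjoint `A^[*] = N Aᵀ M`,
where `M`, `N` are symmetric involutory weight matrices. -/
theorem exists_unique_indefinite_moore_penrose
    {m n : ℕ} (M : Matrix (Fin m) (Fin m) ℝ) (N : Matrix (Fin n) (Fin n) ℝ)
    (hMsymm : M.IsSymm) (hMinv : M * M = 1)
    (hNsymm : N.IsSymm) (hNinv : N * N = 1)
    (A : Matrix (Fin m) (Fin n) ℝ) :
    ∃! X : Matrix (Fin n) (Fin m) ℝ,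
      A * N * X * M * A = A ∧
      X * M * A * N * X = X ∧
      M * (A * N * X)ᵀ * M = A * N * X ∧
      N * (X * M * A)ᵀ * N = X * M * A := by
  have hMt : Mᵀ = M := hMsymm
  have hNt : Nᵀ = N := hNsymm
  have hNl : ∀ {k : ℕ} (Z : Matrix (Fin n) (Fin k) ℝ), N * (N * Z) = Z := by
    intro k Z; rw [← Matrix.mul_assoc, hNinv, Matrix.one_mul]
  have hMl : ∀ {k : ℕ} (Z : Matrix (Fin m) (Fin k) ℝ), M * (M * Z) = Z := by
    intro k Z; rw [← Matrix.mul_assoc, hMinv, Matrix.one_mul]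
  obtain ⟨X', ⟨h1, h2, h3, h4⟩, huniq⟩ := mp_exists_unique A
  refine ⟨N * X' * M, ⟨?_, ?_, ?_, ?_⟩, ?_⟩
  · -- A ∘ X ∘ A = A
    have h1' : A * (X' * A) = A := by simpa [Matrix.mul_assoc] using h1
    simp only [Matrix.mul_assoc, hNl, hMl, hNinv, hMinv, Matrix.mul_one, Matrix.one_mul, h1']
  · -- X ∘ A ∘ X = X
    have h2' : X' * (A * (X' * M)) = X' * M := by
      have := congrArg (fun Z => Z * M) h2
      simpa [Matrix.mul_assoc] using this
    simp only [Matrix.mul_assoc, hNl, hMl, hNinv, hMinv, Matrix.mul_one, Matrix.one_mul, h2']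
  · -- (A ∘ X)^* = A ∘ X
    have h3' : X'ᵀ * (Aᵀ * M) = A * (X' * M) := by
      have := congrArg (fun Z => Z * M) h3
      simpa [Matrix.mul_assoc, Matrix.transpose_mul] using this
    simp only [Matrix.mul_assoc, Matrix.transpose_mul, hMt, hNt, hNl, hMl, hNinv, hMinv,
      Matrix.mul_one, Matrix.one_mul, h3']
  · -- (X ∘ A)^* = X ∘ A
    have h4' : Aᵀ * X'ᵀ = X' * A := by
      simpa [Matrix.transpose_mul] using h4
    simp only [Matrix.mul_assoc, Matrix.transpose_mul, hMt, hNt, hNl, hMl, hNinv, hMinv,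
      Matrix.mul_one, Matrix.one_mul, h4']
  · -- uniqueness
    rintro Y ⟨c1, c2, c3, c4⟩
    have key : N * Y * M = X' := by
      apply huniq
      refine ⟨?_, ?_, ?_, ?_⟩
      · -- A * (N*Y*M) * A = A
        have c1' : A * (N * (Y * (M * A))) = A := by
          simpa [Matrix.mul_assoc] using c1
        simp only [Matrix.mul_assoc, hNl, hMl, hNinv, hMinv, Matrix.mul_one, Matrix.one_mul, c1']
      · -- (N*Y*M) * A * (N*Y*M) = N*Y*M
        have c2' : Y * (M * (A * (N * (Y * M)))) = Y * M := by
          have := congrArg (fun Z => Z * M) c2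
          simpa [Matrix.mul_assoc] using this
        simp only [Matrix.mul_assoc, hNl, hMl, hNinv, hMinv, Matrix.mul_one, Matrix.one_mul, c2']
      · -- (A * (N*Y*M))ᵀ = A * (N*Y*M)
        have c3' : M * (Yᵀ * (Nᵀ * Aᵀ)) = A * (N * (Y * M)) := by
          have := congrArg (fun Z => Z * M) c3
          simpa [Matrix.mul_assoc, Matrix.transpose_mul, hMinv, Matrix.mul_one] using this
        simp only [Matrix.mul_assoc, Matrix.transpose_mul, hMt, hNt, hNl, hMl, hNinv, hMinv,
          Matrix.mul_one, Matrix.one_mul] at c3' ⊢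
        exact c3'
      · -- ((N*Y*M) * A)ᵀ = (N*Y*M) * A
        have c4' : Aᵀ * (Mᵀ * (Yᵀ * N)) = N * (Y * (M * A)) := by
          have := congrArg (fun Z => N * Z) c4
          simpa [Matrix.mul_assoc, Matrix.transpose_mul, hNl] using this
        simp only [Matrix.mul_assoc, Matrix.transpose_mul, hMt, hNt, hNl, hMl, hNinv, hMinv,
          Matrix.mul_one, Matrix.one_mul] at c4' ⊢
        exact c4'
    calc Y = N * (N * (Y * (M * M))) := by
          rw [hMinv, Matrix.mul_one, hNl]
      _ = N * X' * M := by
          rw [← key]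
          simp only [Matrix.mul_assoc]
end

section
/- Let A be a real m×n matrix with indefinite Moore–Penrose inverse A^[†]. Let Y be the indefinite Moore–Penrose inverse of the m×m matrix A∘A^[*] (i.e. Y satisfies the four Moore–Penrose equations for A∘A^[*] with respect to the weight M) and let Z be the indefinite Moore–Penrose inverse of the n×n matrix A^[*]∘A (with respect to the weight N). Then A^[†] = A^[*]∘Y and A^[†] = Z∘A^[*]. -/
open Matrix

/-- Uniqueness of the (ordinary) Moore–Penrose inverse of a square matrix. -/
lemma mp_uniq_aux {k : ℕ} (B Y Y' : Matrix (Fin k) (Fin k) ℝ)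
    (h1 : B*Y*B = B) (h2 : Y*B*Y = Y) (h3 : (B*Y)ᵀ = B*Y) (h4 : (Y*B)ᵀ = Y*B)
    (h1' : B*Y'*B = B) (h2' : Y'*B*Y' = Y') (h3' : (B*Y')ᵀ = B*Y') (h4' : (Y'*B)ᵀ = Y'*B) :
    Y = Y' := by
  have hA : Y*B = Y'*B := by
    calc Y*B = (Y*B)ᵀ := h4.symm
    _ = ((Y*B)*(Y'*B))ᵀ := by rw [show (Y*B)*(Y'*B) = Y*(B*Y'*B) from by noncomm_ring, h1']
    _ = (Y'*B)ᵀ*(Y*B)ᵀ := by rw [Matrix.transpose_mul]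
    _ = (Y'*B)*(Y*B) := by rw [h4', h4]
    _ = Y'*(B*Y*B) := by noncomm_ring
    _ = Y'*B := by rw [h1]
  have hB : B*Y = B*Y' := by
    calc B*Y = (B*Y)ᵀ := h3.symm
    _ = ((B*Y')*(B*Y))ᵀ := by rw [show (B*Y')*(B*Y) = (B*Y'*B)*Y from by noncomm_ring, h1']
    _ = (B*Y)ᵀ*(B*Y')ᵀ := by rw [Matrix.transpose_mul]
    _ = (B*Y)*(B*Y') := by rw [h3, h3']
    _ = (B*Y*B)*Y' := by noncomm_ring
    _ = B*Y' := by rw [h1]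
  calc Y = Y*B*Y := h2.symm
  _ = Y*(B*Y') := by rw [Matrix.mul_assoc, hB]
  _ = (Y*B)*Y' := by rw [Matrix.mul_assoc]
  _ = (Y'*B)*Y' := by rw [hA]
  _ = Y' := h2'

/-- If `X` is the MP inverse of `A`, `Y` the MP inverse of `A*Aᵀ` and `Z` the MP inverse
of `Aᵀ*A` (all ordinary), then `X = Aᵀ*Y` and `X = Z*Aᵀ`. -/
lemma mp_ordinary_aux {m n : ℕ} (A : Matrix (Fin m) (Fin n) ℝ) (X : Matrix (Fin n) (Fin m) ℝ)
    (h1 : A*X*A = A) (h2 : X*A*X = X) (h3 : (A*X)ᵀ = A*X) (h4 : (X*A)ᵀ = X*A)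
    (Y : Matrix (Fin m) (Fin m) ℝ)
    (hY1 : (A*Aᵀ)*Y*(A*Aᵀ) = A*Aᵀ) (hY2 : Y*(A*Aᵀ)*Y = Y)
    (hY3 : ((A*Aᵀ)*Y)ᵀ = (A*Aᵀ)*Y) (hY4 : (Y*(A*Aᵀ))ᵀ = Y*(A*Aᵀ))
    (Z : Matrix (Fin n) (Fin n) ℝ)
    (hZ1 : (Aᵀ*A)*Z*(Aᵀ*A) = Aᵀ*A) (hZ2 : Z*(Aᵀ*A)*Z = Z)
    (hZ3 : ((Aᵀ*A)*Z)ᵀ = (Aᵀ*A)*Z) (hZ4 : (Z*(Aᵀ*A))ᵀ = Z*(Aᵀ*A)) :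
    X = Aᵀ*Y ∧ X = Z*Aᵀ := by
  have s1 : Aᵀ*Xᵀ = X*A := by rw [← Matrix.transpose_mul]; exact h4
  have s2 : Xᵀ*Aᵀ = A*X := by rw [← Matrix.transpose_mul]; exact h3
  have t1 : A*(X*A) = A := by rw [← Matrix.mul_assoc]; exact h1
  have t2 : X*(A*X) = X := by rw [← Matrix.mul_assoc]; exact h2
  have hBY : (A*Aᵀ)*(Xᵀ*X) = A*X := by
    calc (A*Aᵀ)*(Xᵀ*X) = A*((Aᵀ*Xᵀ)*X) := by simp only [Matrix.mul_assoc]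
    _ = A*((X*A)*X) := by rw [s1]
    _ = A*(X*(A*X)) := by rw [Matrix.mul_assoc]
    _ = A*X := by rw [t2]
  have hYB : (Xᵀ*X)*(A*Aᵀ) = A*X := by
    calc (Xᵀ*X)*(A*Aᵀ) = Xᵀ*((X*A)*Aᵀ) := by simp only [Matrix.mul_assoc]
    _ = Xᵀ*((Aᵀ*Xᵀ)*Aᵀ) := by rw [s1]
    _ = (Xᵀ*Aᵀ)*(Xᵀ*Aᵀ) := by simp only [Matrix.mul_assoc]
    _ = (A*X)*(A*X) := by rw [s2]
    _ = A*(X*(A*X)) := by simp only [Matrix.mul_assoc]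
    _ = A*X := by rw [t2]
  have q1 : (A*Aᵀ)*(Xᵀ*X)*(A*Aᵀ) = A*Aᵀ := by
    calc (A*Aᵀ)*(Xᵀ*X)*(A*Aᵀ) = (A*X)*(A*Aᵀ) := by rw [hBY]
    _ = (A*X*A)*Aᵀ := by simp only [Matrix.mul_assoc]
    _ = A*Aᵀ := by rw [h1]
  have q2 : (Xᵀ*X)*(A*Aᵀ)*(Xᵀ*X) = Xᵀ*X := by
    calc (Xᵀ*X)*(A*Aᵀ)*(Xᵀ*X) = (Xᵀ*X)*((A*Aᵀ)*(Xᵀ*X)) := by rw [Matrix.mul_assoc]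
    _ = (Xᵀ*X)*(A*X) := by rw [hBY]
    _ = Xᵀ*(X*(A*X)) := by simp only [Matrix.mul_assoc]
    _ = Xᵀ*X := by rw [t2]
  have q3 : ((A*Aᵀ)*(Xᵀ*X))ᵀ = (A*Aᵀ)*(Xᵀ*X) := by rw [hBY]; exact h3
  have q4 : ((Xᵀ*X)*(A*Aᵀ))ᵀ = (Xᵀ*X)*(A*Aᵀ) := by rw [hYB]; exact h3
  have hYeq : Y = Xᵀ*X := mp_uniq_aux (A*Aᵀ) Y (Xᵀ*X) hY1 hY2 hY3 hY4 q1 q2 q3 q4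
  have hCZ : (Aᵀ*A)*(X*Xᵀ) = X*A := by
    calc (Aᵀ*A)*(X*Xᵀ) = Aᵀ*((A*X)*Xᵀ) := by simp only [Matrix.mul_assoc]
    _ = Aᵀ*((Xᵀ*Aᵀ)*Xᵀ) := by rw [s2]
    _ = (Aᵀ*Xᵀ)*(Aᵀ*Xᵀ) := by simp only [Matrix.mul_assoc]
    _ = (X*A)*(X*A) := by rw [s1]
    _ = X*(A*(X*A)) := by simp only [Matrix.mul_assoc]
    _ = X*A := by rw [t1]
  have hZC : (X*Xᵀ)*(Aᵀ*A) = X*A := by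
    calc (X*Xᵀ)*(Aᵀ*A) = X*((Xᵀ*Aᵀ)*A) := by simp only [Matrix.mul_assoc]
    _ = X*((A*X)*A) := by rw [s2]
    _ = X*(A*(X*A)) := by rw [Matrix.mul_assoc]
    _ = X*(A*(X*A)) := rfl
    _ = X*A := by rw [t1]
  have r1 : (Aᵀ*A)*(X*Xᵀ)*(Aᵀ*A) = Aᵀ*A := by
    calc (Aᵀ*A)*(X*Xᵀ)*(Aᵀ*A) = (X*A)*(Aᵀ*A) := by rw [hCZ]
    _ = (Aᵀ*Xᵀ)*(Aᵀ*A) := by rw [s1]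
    _ = Aᵀ*((Xᵀ*Aᵀ)*A) := by simp only [Matrix.mul_assoc]
    _ = Aᵀ*((A*X)*A) := by rw [s2]
    _ = Aᵀ*A := by rw [show (A*X)*A = A*X*A from rfl, h1]
  have r2 : (X*Xᵀ)*(Aᵀ*A)*(X*Xᵀ) = X*Xᵀ := by
    calc (X*Xᵀ)*(Aᵀ*A)*(X*Xᵀ) = (X*A)*(X*Xᵀ) := by rw [hZC]
    _ = (X*A*X)*Xᵀ := by simp only [Matrix.mul_assoc]
    _ = X*Xᵀ := by rw [h2]
  have r3 : ((Aᵀ*A)*(X*Xᵀ))ᵀ = (Aᵀ*A)*(X*Xᵀ) := by rw [hCZ]; exact h4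
  have r4 : ((X*Xᵀ)*(Aᵀ*A))ᵀ = (X*Xᵀ)*(Aᵀ*A) := by rw [hZC]; exact h4
  have hZeq : Z = X*Xᵀ := mp_uniq_aux (Aᵀ*A) Z (X*Xᵀ) hZ1 hZ2 hZ3 hZ4 r1 r2 r3 r4
  constructor
  · rw [hYeq, ← Matrix.mul_assoc, s1]; exact h2.symm
  · rw [hZeq, Matrix.mul_assoc, s2, t2]

/-- Lemma 2.1 (ii): `A^[†] = A^[*]∘(A∘A^[*])^[†]` and `A^[†] = (A^[*]∘A)^[†]∘A^[*]`.
Here `X = A^[†]`, `Y = (A∘A^[*])^[†]` (an `m × m` matrix, weight `M`) and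
`Z = (A^[*]∘A)^[†]` (an `n × n` matrix, weight `N`), with `A^[*] = N Aᵀ M`. -/
theorem pinv_eq_adjoint_mul_pinv_gram
    {m n : ℕ} (M : Matrix (Fin m) (Fin m) ℝ) (N : Matrix (Fin n) (Fin n) ℝ)
    (hMsymm : M.IsSymm) (hMinv : M * M = 1)
    (hNsymm : N.IsSymm) (hNinv : N * N = 1)
    (A : Matrix (Fin m) (Fin n) ℝ) (X : Matrix (Fin n) (Fin m) ℝ)
    (hX1 : A * N * X * M * A = A)
    (hX2 : X * M * A * N * X = X)
    (hX3 : M * (A * N * X)ᵀ * M = A * N * X)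
    (hX4 : N * (X * M * A)ᵀ * N = X * M * A)
    (Y : Matrix (Fin m) (Fin m) ℝ)
    (hY1 : (A * N * (N * Aᵀ * M)) * M * Y * M * (A * N * (N * Aᵀ * M)) = A * N * (N * Aᵀ * M))
    (hY2 : Y * M * (A * N * (N * Aᵀ * M)) * M * Y = Y)
    (hY3 : M * ((A * N * (N * Aᵀ * M)) * M * Y)ᵀ * M = (A * N * (N * Aᵀ * M)) * M * Y)
    (hY4 : M * (Y * M * (A * N * (N * Aᵀ * M)))ᵀ * M = Y * M * (A * N * (N * Aᵀ * M)))
    (Z : Matrix (Fin n) (Fin n) ℝ)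
    (hZ1 : ((N * Aᵀ * M) * M * A) * N * Z * N * ((N * Aᵀ * M) * M * A) = (N * Aᵀ * M) * M * A)
    (hZ2 : Z * N * ((N * Aᵀ * M) * M * A) * N * Z = Z)
    (hZ3 : N * (((N * Aᵀ * M) * M * A) * N * Z)ᵀ * N = ((N * Aᵀ * M) * M * A) * N * Z)
    (hZ4 : N * (Z * N * ((N * Aᵀ * M) * M * A))ᵀ * N = Z * N * ((N * Aᵀ * M) * M * A)) :
    X = (N * Aᵀ * M) * M * Y ∧ X = Z * N * (N * Aᵀ * M) := by
  have hMt : Mᵀ = M := hMsymm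
  have hNt : Nᵀ = N := hNsymm
  have hM2 : ∀ {p : ℕ} (R : Matrix (Fin m) (Fin p) ℝ), M*(M*R) = R := fun R => by
    rw [← Matrix.mul_assoc, hMinv, Matrix.one_mul]
  have hN2 : ∀ {p : ℕ} (R : Matrix (Fin n) (Fin p) ℝ), N*(N*R) = R := fun R => by
    rw [← Matrix.mul_assoc, hNinv, Matrix.one_mul]
  -- the transformed matrices Ā = A*N, X̄ = X*M satisfy the ordinary MP equations
  have HX1 : (A*N)*(X*M)*(A*N) = A*N := by
    simpa only [Matrix.mul_assoc] using congrArg (fun T => T * N) hX1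
  have HX2 : (X*M)*(A*N)*(X*M) = X*M := by
    simpa only [Matrix.mul_assoc] using congrArg (fun T => T * M) hX2
  have eX3 : M*(A*N*X)ᵀ = A*N*X*M := by
    have h := congrArg (fun T => T * M) hX3
    rwa [Matrix.mul_assoc (M*(A*N*X)ᵀ) M M, hMinv, Matrix.mul_one] at h
  have HX3 : ((A*N)*(X*M))ᵀ = (A*N)*(X*M) := by
    have e : (A*N)*(X*M) = (A*N*X)*M := by simp only [Matrix.mul_assoc]
    rw [e, Matrix.transpose_mul, hMt, eX3]
  have eX4 : N*(X*M*A)ᵀ = X*M*A*N := by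
    have h := congrArg (fun T => T * N) hX4
    rwa [Matrix.mul_assoc (N*(X*M*A)ᵀ) N N, hNinv, Matrix.mul_one] at h
  have HX4 : ((X*M)*(A*N))ᵀ = (X*M)*(A*N) := by
    have e : (X*M)*(A*N) = (X*M*A)*N := by simp only [Matrix.mul_assoc]
    rw [e, Matrix.transpose_mul, hNt, eX4]
  -- B*M = Ā*Āᵀ and C*N = Āᵀ*Ā
  have hB : (A * N * (N * Aᵀ * M))*M = (A*N)*(A*N)ᵀ := by
    simp only [Matrix.transpose_mul, hNt, Matrix.mul_assoc, hM2, hN2, hMinv, hNinv, Matrix.mul_one]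
  have hC : ((N * Aᵀ * M) * M * A)*N = (A*N)ᵀ*(A*N) := by
    simp only [Matrix.transpose_mul, hNt, Matrix.mul_assoc, hM2, hN2, hMinv, hNinv, Matrix.mul_one]
  have HY1 : ((A*N)*(A*N)ᵀ)*(Y*M)*((A*N)*(A*N)ᵀ) = (A*N)*(A*N)ᵀ := by
    rw [← hB]
    simpa only [Matrix.mul_assoc] using congrArg (fun T => T * M) hY1
  have HY2 : (Y*M)*((A*N)*(A*N)ᵀ)*(Y*M) = Y*M := by
    rw [← hB]
    simpa only [Matrix.mul_assoc] using congrArg (fun T => T * M) hY2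
  have eY3 : M*((A * N * (N * Aᵀ * M)) * M * Y)ᵀ = (A * N * (N * Aᵀ * M)) * M * Y * M := by
    have h := congrArg (fun T => T * M) hY3
    rwa [Matrix.mul_assoc (M*((A * N * (N * Aᵀ * M)) * M * Y)ᵀ) M M, hMinv, Matrix.mul_one] at h
  have HY3 : (((A*N)*(A*N)ᵀ)*(Y*M))ᵀ = ((A*N)*(A*N)ᵀ)*(Y*M) := by
    rw [← hB]
    have e : ((A * N * (N * Aᵀ * M))*M)*(Y*M) = ((A * N * (N * Aᵀ * M))*M*Y)*M := by
      simp only [Matrix.mul_assoc]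
    rw [e, Matrix.transpose_mul, hMt, eY3]
  have eY4 : M*(Y * M * (A * N * (N * Aᵀ * M)))ᵀ = Y * M * (A * N * (N * Aᵀ * M)) * M := by
    have h := congrArg (fun T => T * M) hY4
    rwa [Matrix.mul_assoc (M*(Y * M * (A * N * (N * Aᵀ * M)))ᵀ) M M, hMinv, Matrix.mul_one] at h
  have HY4 : ((Y*M)*((A*N)*(A*N)ᵀ))ᵀ = (Y*M)*((A*N)*(A*N)ᵀ) := by
    rw [← hB]
    have e : (Y*M)*((A * N * (N * Aᵀ * M))*M) = (Y*M*(A * N * (N * Aᵀ * M)))*M := by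
      simp only [Matrix.mul_assoc]
    rw [e, Matrix.transpose_mul, hMt, eY4]
  have HZ1 : ((A*N)ᵀ*(A*N))*(Z*N)*((A*N)ᵀ*(A*N)) = (A*N)ᵀ*(A*N) := by
    rw [← hC]
    simpa only [Matrix.mul_assoc] using congrArg (fun T => T * N) hZ1
  have HZ2 : (Z*N)*((A*N)ᵀ*(A*N))*(Z*N) = Z*N := by
    rw [← hC]
    simpa only [Matrix.mul_assoc] using congrArg (fun T => T * N) hZ2
  have eZ3 : N*(((N * Aᵀ * M) * M * A) * N * Z)ᵀ = ((N * Aᵀ * M) * M * A) * N * Z * N := by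
    have h := congrArg (fun T => T * N) hZ3
    rwa [Matrix.mul_assoc (N*(((N * Aᵀ * M) * M * A) * N * Z)ᵀ) N N, hNinv, Matrix.mul_one] at h
  have HZ3 : (((A*N)ᵀ*(A*N))*(Z*N))ᵀ = ((A*N)ᵀ*(A*N))*(Z*N) := by
    rw [← hC]
    have e : (((N * Aᵀ * M) * M * A)*N)*(Z*N) = (((N * Aᵀ * M) * M * A)*N*Z)*N := by
      simp only [Matrix.mul_assoc]
    rw [e, Matrix.transpose_mul, hNt, eZ3]
  have eZ4 : N*(Z * N * ((N * Aᵀ * M) * M * A))ᵀ = Z * N * ((N * Aᵀ * M) * M * A) * N := by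
    have h := congrArg (fun T => T * N) hZ4
    rwa [Matrix.mul_assoc (N*(Z * N * ((N * Aᵀ * M) * M * A))ᵀ) N N, hNinv, Matrix.mul_one] at h
  have HZ4 : ((Z*N)*((A*N)ᵀ*(A*N)))ᵀ = (Z*N)*((A*N)ᵀ*(A*N)) := by
    rw [← hC]
    have e : (Z*N)*(((N * Aᵀ * M) * M * A)*N) = (Z*N*((N * Aᵀ * M) * M * A))*N := by
      simp only [Matrix.mul_assoc]
    rw [e, Matrix.transpose_mul, hNt, eZ4]
  obtain ⟨c1, c2⟩ := mp_ordinary_aux (A*N) (X*M) HX1 HX2 HX3 HX4 (Y*M) HY1 HY2 HY3 HY4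
    (Z*N) HZ1 HZ2 HZ3 HZ4
  constructor
  · have h := congrArg (fun T => T * M) c1
    simp only [Matrix.transpose_mul, hNt, Matrix.mul_assoc, hM2, hN2, hMinv, hNinv,
      Matrix.mul_one] at h
    simp only [Matrix.mul_assoc, hM2, hN2]
    exact h
  · have h := congrArg (fun T => T * M) c2
    simp only [Matrix.transpose_mul, hNt, Matrix.mul_assoc, hM2, hN2, hMinv, hNinv,
      Matrix.mul_one] at h
    simp only [Matrix.mul_assoc, hM2, hN2]
    exact h
end

section
/- Let A be a real m×n matrix with indefinite Moore–Penrose inverse A^[†], and let Z be the indefinite Moore–Penrose inverse of the n×n Gram matrix A^[*]∘A (with respect to the weight N). Then A^[†]∘(A^[†])^[*] = Z, i.e. A^[†]∘(A^[†])^[*] = (A^[*]∘A)^[†]. -/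
open Matrix

/-- Uniqueness of the (ordinary) Moore–Penrose inverse of a square real matrix. -/
theorem mp_unique_aux {n : ℕ} {B Y₁ Y₂ : Matrix (Fin n) (Fin n) ℝ}
    (a1 : B * Y₁ * B = B) (a2 : Y₁ * B * Y₁ = Y₁)
    (a3 : (B * Y₁)ᵀ = B * Y₁) (a4 : (Y₁ * B)ᵀ = Y₁ * B)
    (b1 : B * Y₂ * B = B) (b2 : Y₂ * B * Y₂ = Y₂)
    (b3 : (B * Y₂)ᵀ = B * Y₂) (b4 : (Y₂ * B)ᵀ = Y₂ * B) :
    Y₁ = Y₂ := by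
  have hBY : B * Y₁ = B * Y₂ := by
    calc B * Y₁ = (B * Y₂ * B) * Y₁ := by rw [b1]
      _ = (B * Y₂) * (B * Y₁) := by simp only [Matrix.mul_assoc]
      _ = (B * Y₂)ᵀ * (B * Y₁)ᵀ := by rw [b3, a3]
      _ = Y₂ᵀ * (B * Y₁ * B)ᵀ := by
          simp only [Matrix.transpose_mul, Matrix.mul_assoc]
      _ = Y₂ᵀ * Bᵀ := by rw [a1]
      _ = (B * Y₂)ᵀ := (Matrix.transpose_mul _ _).symm
      _ = B * Y₂ := b3
  have hYB : Y₁ * B = Y₂ * B := by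
    calc Y₁ * B = Y₁ * (B * Y₂ * B) := by rw [b1]
      _ = (Y₁ * B) * (Y₂ * B) := by simp only [Matrix.mul_assoc]
      _ = (Y₁ * B)ᵀ * (Y₂ * B)ᵀ := by rw [b4, a4]
      _ = (B * Y₁ * B)ᵀ * Y₂ᵀ := by
          simp only [Matrix.transpose_mul, Matrix.mul_assoc]
      _ = Bᵀ * Y₂ᵀ := by rw [a1]
      _ = (Y₂ * B)ᵀ := (Matrix.transpose_mul _ _).symm
      _ = Y₂ * B := b4
  calc Y₁ = Y₁ * B * Y₁ := a2.symm
    _ = Y₂ * B * Y₁ := by rw [hYB]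
    _ = Y₂ * (B * Y₁) := by rw [Matrix.mul_assoc]
    _ = Y₂ * (B * Y₂) := by rw [hBY]
    _ = Y₂ * B * Y₂ := by rw [Matrix.mul_assoc]
    _ = Y₂ := b2

/-- Lemma 2.1 (iii): `A^[†]∘(A^[†])^[*] = (A^[*]∘A)^[†]`.
Here `X = A^[†]`, `(A^[†])^[*] = M Xᵀ N`, and `Z = (A^[*]∘A)^[†]` is the indefinite
Moore–Penrose inverse (weight `N`) of the Gram matrix `A^[*]∘A = (N Aᵀ M) M A`. -/
theorem pinv_mul_pinv_adjoint_eq_pinv_gram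
    {m n : ℕ} (M : Matrix (Fin m) (Fin m) ℝ) (N : Matrix (Fin n) (Fin n) ℝ)
    (hMsymm : M.IsSymm) (hMinv : M * M = 1)
    (hNsymm : N.IsSymm) (hNinv : N * N = 1)
    (A : Matrix (Fin m) (Fin n) ℝ) (X : Matrix (Fin n) (Fin m) ℝ)
    (hX1 : A * N * X * M * A = A)
    (hX2 : X * M * A * N * X = X)
    (hX3 : M * (A * N * X)ᵀ * M = A * N * X)
    (hX4 : N * (X * M * A)ᵀ * N = X * M * A)
    (Z : Matrix (Fin n) (Fin n) ℝ)
    (hZ1 : ((N * Aᵀ * M) * M * A) * N * Z * N * ((N * Aᵀ * M) * M * A) = (N * Aᵀ * M) * M * A)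
    (hZ2 : Z * N * ((N * Aᵀ * M) * M * A) * N * Z = Z)
    (hZ3 : N * (((N * Aᵀ * M) * M * A) * N * Z)ᵀ * N = ((N * Aᵀ * M) * M * A) * N * Z)
    (hZ4 : N * (Z * N * ((N * Aᵀ * M) * M * A))ᵀ * N = Z * N * ((N * Aᵀ * M) * M * A)) :
    X * M * (M * Xᵀ * N) = Z := by
  have hM : Mᵀ = M := hMsymm
  have hN : Nᵀ = N := hNsymm
  -- simplify the Gram matrix in the Z hypotheses
  have key : N * Aᵀ * M * M = N * Aᵀ := by
    rw [Matrix.mul_assoc (N * Aᵀ) M M, hMinv, Matrix.mul_one]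
  rw [key] at hZ1 hZ2 hZ3 hZ4
  -- derived facts about X (with arbitrary left context, left-associated)
  have e1 : ∀ {k : ℕ} (C : Matrix (Fin k) (Fin m) ℝ), C * A * N * X * M * A = C * A := by
    intro k C
    simp only [Matrix.mul_assoc]
    simp only [Matrix.mul_assoc] at hX1
    rw [hX1]
  have e3 : ∀ {k : ℕ} (C : Matrix (Fin k) (Fin m) ℝ),
      C * Xᵀ * N * Aᵀ = C * M * A * N * X * M := by
    intro k C
    have h : Xᵀ * N * Aᵀ = M * A * N * X * M := by
      have := congrArg Matrix.transpose hX3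
      simp only [Matrix.transpose_mul, Matrix.transpose_transpose, hM, hN] at this
      calc Xᵀ * N * Aᵀ = (A * N * X)ᵀ := by
            simp only [Matrix.transpose_mul, hN, Matrix.mul_assoc]
        _ = M * A * N * X * M := by
            rw [← hX3]
            simp only [Matrix.transpose_mul, Matrix.transpose_transpose, hM, hN,
              Matrix.mul_assoc]
    simp only [Matrix.mul_assoc]
    simp only [Matrix.mul_assoc] at h
    rw [h]
  have e4 : ∀ {k : ℕ} (C : Matrix (Fin k) (Fin m) ℝ),
      C * A * N * X = C * M * Xᵀ * N * Aᵀ * M := by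
    intro k C
    have h : A * N * X = M * Xᵀ * N * Aᵀ * M := by
      rw [← hX3]
      simp only [Matrix.transpose_mul, hM, hN, Matrix.mul_assoc]
    simp only [Matrix.mul_assoc]
    simp only [Matrix.mul_assoc] at h
    rw [h]
  have e5 : N * Aᵀ * M * Xᵀ = X * M * A * N := by
    have h := congrArg (· * N) hX4
    simp only [Matrix.transpose_mul, hM, hN] at h
    calc N * Aᵀ * M * Xᵀ = N * Aᵀ * M * Xᵀ * (N * N) := by rw [hNinv, Matrix.mul_one]
      _ = (N * (Aᵀ * M * Xᵀ) * N) * N := by simp only [Matrix.mul_assoc]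
      _ = X * M * A * N := by
          simp only [Matrix.mul_assoc] at h ⊢
          exact h
  have e5' : ∀ {k : ℕ} (C : Matrix (Fin k) (Fin n) ℝ),
      C * N * Aᵀ * M * Xᵀ = C * X * M * A * N := by
    intro k C
    simp only [Matrix.mul_assoc]
    simp only [Matrix.mul_assoc] at e5
    rw [e5]
  have hSsymm : (X * M * A * N)ᵀ = X * M * A * N := by
    simp only [Matrix.transpose_mul, hM, hN]
    calc N * (Aᵀ * (Mᵀᵀ * Xᵀ)) = N * Aᵀ * M * Xᵀ := by
          simp only [Matrix.transpose_transpose, hM, Matrix.mul_assoc]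
      _ = X * M * A * N := e5
  -- Y₁ := X * Xᵀ satisfies the four Penrose equations for B
  have a1 : (N * Aᵀ * A * N) * (X * Xᵀ) * (N * Aᵀ * A * N) = N * Aᵀ * A * N := by
    calc N * Aᵀ * A * N * (X * Xᵀ) * (N * Aᵀ * A * N)
        = N * Aᵀ * A * N * X * Xᵀ * N * Aᵀ * A * N := by
          simp only [Matrix.mul_assoc]
      _ = N * Aᵀ * A * N * X * M * A * N * X * M * A * N := by
          rw [e3 (N * Aᵀ * A * N * X)]
      _ = N * Aᵀ * A * N := by rw [e1 (N * Aᵀ), e1 (N * Aᵀ)]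
  have a2 : (X * Xᵀ) * (N * Aᵀ * A * N) * (X * Xᵀ) = X * Xᵀ := by
    calc X * Xᵀ * (N * Aᵀ * A * N) * (X * Xᵀ)
        = X * Xᵀ * N * Aᵀ * A * N * X * Xᵀ := by simp only [Matrix.mul_assoc]
      _ = X * M * A * N * X * M * A * N * X * Xᵀ := by
          rw [e3 X]
      _ = X * Xᵀ := by rw [hX2, hX2]
  have hBY : (N * Aᵀ * A * N) * (X * Xᵀ) = X * M * A * N := by
    calc N * Aᵀ * A * N * (X * Xᵀ)
        = N * Aᵀ * A * N * X * Xᵀ := by simp only [Matrix.mul_assoc]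
      _ = N * Aᵀ * M * Xᵀ * N * Aᵀ * M * Xᵀ := by
          rw [e4 (N * Aᵀ)]
      _ = X * M * A * N * N * Aᵀ * M * Xᵀ := by
          rw [e5]
      _ = X * M * A * N * X * M * A * N := by rw [e5' (X * M * A * N)]
      _ = X * M * A * N := by rw [hX2]
  have hYB : (X * Xᵀ) * (N * Aᵀ * A * N) = X * M * A * N := by
    calc X * Xᵀ * (N * Aᵀ * A * N)
        = X * Xᵀ * N * Aᵀ * A * N := by simp only [Matrix.mul_assoc]
      _ = X * M * A * N * X * M * A * N := by
          rw [e3 X]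
      _ = X * M * A * N := by rw [hX2]
  have a3 : ((N * Aᵀ * A * N) * (X * Xᵀ))ᵀ = (N * Aᵀ * A * N) * (X * Xᵀ) := by
    rw [hBY, hSsymm]
  have a4 : ((X * Xᵀ) * (N * Aᵀ * A * N))ᵀ = (X * Xᵀ) * (N * Aᵀ * A * N) := by
    rw [hYB, hSsymm]
  -- Y₂ := Z * N satisfies the four Penrose equations for B
  have b1 : (N * Aᵀ * A * N) * (Z * N) * (N * Aᵀ * A * N) = N * Aᵀ * A * N := by
    have h := congrArg (· * N) hZ1
    simp only [Matrix.mul_assoc] at h ⊢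
    exact h
  have b2 : (Z * N) * (N * Aᵀ * A * N) * (Z * N) = Z * N := by
    have h := congrArg (· * N) hZ2
    simp only [Matrix.mul_assoc] at h ⊢
    exact h
  have hCN : ∀ C : Matrix (Fin n) (Fin n) ℝ, N * Cᵀ * N = C → (C * N)ᵀ = C * N := by
    intro C hC
    calc (C * N)ᵀ = Nᵀ * Cᵀ := Matrix.transpose_mul _ _
      _ = N * Cᵀ * (N * N) := by rw [hN, hNinv, Matrix.mul_one]
      _ = (N * Cᵀ * N) * N := by simp only [Matrix.mul_assoc]
      _ = C * N := by rw [hC]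
  have b3 : ((N * Aᵀ * A * N) * (Z * N))ᵀ = (N * Aᵀ * A * N) * (Z * N) := by
    have h : (N * Aᵀ * A * N) * (Z * N) = (N * Aᵀ * A * N * Z) * N := by
      simp only [Matrix.mul_assoc]
    rw [h]
    exact hCN _ (by simp only [Matrix.mul_assoc] at hZ3 ⊢; exact hZ3)
  have b4 : ((Z * N) * (N * Aᵀ * A * N))ᵀ = (Z * N) * (N * Aᵀ * A * N) := by
    have h : (Z * N) * (N * Aᵀ * A * N) = (Z * N * (N * Aᵀ * A)) * N := by
      simp only [Matrix.mul_assoc]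
    rw [h]
    exact hCN _ (by simp only [Matrix.mul_assoc] at hZ4 ⊢; exact hZ4)
  have huniq : X * Xᵀ = Z * N := mp_unique_aux a1 a2 a3 a4 b1 b2 b3 b4
  calc X * M * (M * Xᵀ * N) = X * (M * M) * Xᵀ * N := by simp only [Matrix.mul_assoc]
    _ = X * Xᵀ * N := by rw [hMinv, Matrix.mul_one]
    _ = Z * N * N := by rw [huniq]
    _ = Z := by rw [Matrix.mul_assoc, hNinv, Matrix.mul_one]
end

section
/- Let A be a real m×n matrix with M A = A N, with indefinite Moore–Penrose inverse A^[†], let K ⊆ ℝⁿ be a closed cone, and let I be the n×n identity. Then (A∘I∘K)^[*] ⊆ (A^[†])^[*]∘I∘K^[*] + 𝒩((A∘I)^[*]), where + denotes Minkowski sum. Moreover, if A^[†]∘A∘K ⊆ K, then (A∘I∘K)^[*] = (A^[†])^[*]∘I∘K^[*] + 𝒩((A∘I)^[*]). -/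
open Matrix Pointwise

/-- The `n × n` real identity matrix. -/
def idMat (n : ℕ) : Matrix (Fin n) (Fin n) ℝ := 1

/-- Theorem 3.4: `(A∘I∘K)^[*] ⊆ (A^[†])^[*]∘I∘K^[*] + 𝒩((A∘I)^[*])`, with equality when
`A^[†]∘A∘K ⊆ K`. Here `X = A^[†]`, `(A^[†])^[*] = M Xᵀ N`, duals are taken w.r.t. the
indefinite inner products given by `M` (in `ℝᵐ`) and `N` (in `ℝⁿ`), and `+` is
Minkowski sum. -/
theorem dual_of_image_cone
    {m n : ℕ} (M : Matrix (Fin m) (Fin m) ℝ) (N : Matrix (Fin n) (Fin n) ℝ)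
    (hMsymm : M.IsSymm) (hMinv : M * M = 1)
    (hNsymm : N.IsSymm) (hNinv : N * N = 1)
    (A : Matrix (Fin m) (Fin n) ℝ) (X : Matrix (Fin n) (Fin m) ℝ)
    (hX1 : A * N * X * M * A = A)
    (hX2 : X * M * A * N * X = X)
    (hX3 : M * (A * N * X)ᵀ * M = A * N * X)
    (hX4 : N * (X * M * A)ᵀ * N = X * M * A)
    (hA : M * A = A * N)
    (K : Set (Fin n → ℝ)) (hKclosed : IsClosed K)
    (hKadd : ∀ x ∈ K, ∀ y ∈ K, x + y ∈ K)
    (hKsmul : ∀ x ∈ K, ∀ c : ℝ, 0 ≤ c → c • x ∈ K) :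
    {u : Fin m → ℝ | ∀ t ∈ (fun x => ((A * N * idMat n) * N) *ᵥ x) '' K, 0 ≤ u ⬝ᵥ (M *ᵥ t)}
      ⊆ (fun x => (((M * Xᵀ * N) * N * idMat n) * N) *ᵥ x) ''
          {w : Fin n → ℝ | ∀ t ∈ K, 0 ≤ w ⬝ᵥ (N *ᵥ t)}
        + {w : Fin m → ℝ | ((N * (A * N * idMat n)ᵀ * M) * M) *ᵥ w = 0} ∧
    ((fun x => ((X * M * A) * N) *ᵥ x) '' K ⊆ K →
      {u : Fin m → ℝ | ∀ t ∈ (fun x => ((A * N * idMat n) * N) *ᵥ x) '' K, 0 ≤ u ⬝ᵥ (M *ᵥ t)}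
        = (fun x => (((M * Xᵀ * N) * N * idMat n) * N) *ᵥ x) ''
            {w : Fin n → ℝ | ∀ t ∈ K, 0 ≤ w ⬝ᵥ (N *ᵥ t)}
          + {w : Fin m → ℝ | ((N * (A * N * idMat n)ᵀ * M) * M) *ᵥ w = 0}) := by
  have hNN : ∀ {k : ℕ} (B : Matrix (Fin n) (Fin k) ℝ), N * (N * B) = B := by
    intro k B; rw [← Matrix.mul_assoc, hNinv, Matrix.one_mul]
  have hMM : ∀ {k : ℕ} (B : Matrix (Fin m) (Fin k) ℝ), M * (M * B) = B := by
    intro k B; rw [← Matrix.mul_assoc, hMinv, Matrix.one_mul]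
  have hB1 : A * N * idMat n * N = A := by
    simp [idMat, Matrix.mul_assoc, hNinv]
  have hB2 : M * Xᵀ * N * N * idMat n * N = M * Xᵀ * N := by
    simp [idMat, Matrix.mul_assoc, hNinv, hNN]
  have hB3 : N * (A * N * idMat n)ᵀ * M * M = Aᵀ := by
    simp [idMat, Matrix.transpose_mul, hNsymm.eq, Matrix.mul_assoc, hMinv, hNN]
  have hB4 : X * M * A * N = X * A := by
    rw [Matrix.mul_assoc X M A, hA, ← Matrix.mul_assoc,
      Matrix.mul_assoc (X * A) N N, hNinv, Matrix.mul_one]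
  have key1 : Aᵀ * (M * Xᵀ * N) * Aᵀ = Aᵀ := by
    have h := congrArg Matrix.transpose hX1
    simp only [Matrix.transpose_mul, hMsymm.eq, hNsymm.eq] at h
    simpa only [Matrix.mul_assoc] using h
  have keyT : (M * Xᵀ * N)ᵀ * (M * A) = N * (X * A) := by
    simp [Matrix.transpose_mul, Matrix.transpose_transpose, hMsymm.eq, hNsymm.eq,
      Matrix.mul_assoc, hMM]
  simp only [hB1, hB2, hB3, hB4]
  have hsub : {u : Fin m → ℝ | ∀ t ∈ (fun x => A *ᵥ x) '' K, 0 ≤ u ⬝ᵥ (M *ᵥ t)}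
      ⊆ (fun x => (M * Xᵀ * N) *ᵥ x) '' {w : Fin n → ℝ | ∀ t ∈ K, 0 ≤ w ⬝ᵥ (N *ᵥ t)}
        + {w : Fin m → ℝ | Aᵀ *ᵥ w = 0} := by
    intro u hu
    rw [Set.mem_add]
    refine ⟨(M * Xᵀ * N) *ᵥ (Aᵀ *ᵥ u), ⟨Aᵀ *ᵥ u, ?_, rfl⟩,
      u - (M * Xᵀ * N) *ᵥ (Aᵀ *ᵥ u), ?_, by abel⟩
    · intro t ht
      have : (Aᵀ *ᵥ u) ⬝ᵥ (N *ᵥ t) = u ⬝ᵥ (M *ᵥ (A *ᵥ t)) := by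
        rw [Matrix.mulVec_transpose, ← Matrix.dotProduct_mulVec,
          Matrix.mulVec_mulVec, ← hA, ← Matrix.mulVec_mulVec]
      rw [this]
      exact hu _ ⟨t, ht, rfl⟩
    · show Aᵀ *ᵥ (u - (M * Xᵀ * N) *ᵥ (Aᵀ *ᵥ u)) = 0
      rw [Matrix.mulVec_sub, Matrix.mulVec_mulVec, Matrix.mulVec_mulVec, key1, sub_self]
  refine ⟨hsub, fun hInv => Set.Subset.antisymm hsub ?_⟩
  intro u hu
  rw [Set.mem_add] at hu
  obtain ⟨p, ⟨w, hw, rfl⟩, z, hz, hpz⟩ := hu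
  subst hpz
  rintro t ⟨x, hx, rfl⟩
  have hz' : Aᵀ *ᵥ z = 0 := hz
  have hterm2 : z ⬝ᵥ (M *ᵥ (A *ᵥ x)) = 0 := by
    rw [Matrix.mulVec_mulVec, hA, ← Matrix.mulVec_mulVec, Matrix.dotProduct_mulVec,
      ← Matrix.mulVec_transpose, hz', zero_dotProduct]
  have hterm1 : ((M * Xᵀ * N) *ᵥ w) ⬝ᵥ (M *ᵥ (A *ᵥ x)) = w ⬝ᵥ (N *ᵥ ((X * A) *ᵥ x)) := by
    rw [Matrix.mulVec_mulVec, dotProduct_comm, Matrix.dotProduct_mulVec,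
      ← Matrix.mulVec_transpose, Matrix.mulVec_mulVec, keyT,
      ← Matrix.mulVec_mulVec, dotProduct_comm]
  show 0 ≤ ((M * Xᵀ * N) *ᵥ w + z) ⬝ᵥ (M *ᵥ (A *ᵥ x))
  rw [add_dotProduct, hterm1, hterm2, add_zero]
  exact hw _ (hInv ⟨x, hx, rfl⟩)
end

section
/- Let A be a real m×n matrix with M A = A N, with indefinite Moore–Penrose inverse A^[†], let K ⊆ ℝⁿ be a closed cone, and let I be the n×n identity. Then (A∘I∘K)^[*] ∩ R(A∘I) ⊆ (A^[†])^[*]∘I∘K^[*]. Moreover, if A^[†]∘A∘K ⊆ K, then (A∘I∘K)^[*] ∩ R(A∘I) = (A^[†])^[*]∘I∘K^[*]. -/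
open Matrix

/-- Lemma 3.8: `(A∘I∘K)^[*] ∩ R(A∘I) ⊆ (A^[†])^[*]∘I∘K^[*]`, with equality when
`A^[†]∘A∘K ⊆ K`. Here `X = A^[†]`, `(A^[†])^[*] = M Xᵀ N`, `R(A∘I)` is the range of
`A∘I`, and duals are taken w.r.t. the weights `M` (in `ℝᵐ`) and `N` (in `ℝⁿ`). -/
theorem dual_inter_range_subset
    {m n : ℕ} (M : Matrix (Fin m) (Fin m) ℝ) (N : Matrix (Fin n) (Fin n) ℝ)
    (hMsymm : M.IsSymm) (hMinv : M * M = 1)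
    (hNsymm : N.IsSymm) (hNinv : N * N = 1)
    (A : Matrix (Fin m) (Fin n) ℝ) (X : Matrix (Fin n) (Fin m) ℝ)
    (hX1 : A * N * X * M * A = A)
    (hX2 : X * M * A * N * X = X)
    (hX3 : M * (A * N * X)ᵀ * M = A * N * X)
    (hX4 : N * (X * M * A)ᵀ * N = X * M * A)
    (hA : M * A = A * N)
    (K : Set (Fin n → ℝ)) (hKclosed : IsClosed K)
    (hKadd : ∀ x ∈ K, ∀ y ∈ K, x + y ∈ K)
    (hKsmul : ∀ x ∈ K, ∀ c : ℝ, 0 ≤ c → c • x ∈ K) :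
    {u : Fin m → ℝ | ∀ t ∈ (fun x => ((A * N * idMat n) * N) *ᵥ x) '' K, 0 ≤ u ⬝ᵥ (M *ᵥ t)}
        ∩ {y : Fin m → ℝ | ∃ x : Fin n → ℝ, y = ((A * N * idMat n) * N) *ᵥ x}
      ⊆ (fun x => (((M * Xᵀ * N) * N * idMat n) * N) *ᵥ x) ''
          {w : Fin n → ℝ | ∀ t ∈ K, 0 ≤ w ⬝ᵥ (N *ᵥ t)} ∧
    ((fun x => ((X * M * A) * N) *ᵥ x) '' K ⊆ K →
      {u : Fin m → ℝ | ∀ t ∈ (fun x => ((A * N * idMat n) * N) *ᵥ x) '' K, 0 ≤ u ⬝ᵥ (M *ᵥ t)}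
          ∩ {y : Fin m → ℝ | ∃ x : Fin n → ℝ, y = ((A * N * idMat n) * N) *ᵥ x}
        = (fun x => (((M * Xᵀ * N) * N * idMat n) * N) *ᵥ x) ''
            {w : Fin n → ℝ | ∀ t ∈ K, 0 ≤ w ⬝ᵥ (N *ᵥ t)}) := by
  have hM : Mᵀ = M := hMsymm
  have hN : Nᵀ = N := hNsymm
  have hMM : ∀ {p : ℕ} (B : Matrix (Fin p) (Fin m) ℝ), B * M * M = B := fun B => by
    rw [Matrix.mul_assoc, hMinv, Matrix.mul_one]
  have hNN : ∀ {p : ℕ} (B : Matrix (Fin p) (Fin n) ℝ), B * N * N = B := fun B => by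
    rw [Matrix.mul_assoc, hNinv, Matrix.mul_one]
  -- simplifications of the weighted products
  have hAN : A * N * idMat n * N = A := by
    rw [idMat, Matrix.mul_one, hNN]
  have hBN : M * Xᵀ * N * N * idMat n * N = M * Xᵀ * N := by
    rw [idMat, Matrix.mul_one, hNN]
  -- key matrix identities
  have h3' : M * Xᵀ * N * Aᵀ * M = A * N * X := by
    conv_rhs => rw [← hX3]
    simp only [Matrix.transpose_mul, hM, hN, ← Matrix.mul_assoc]
  have h2 : M * Xᵀ * N * Aᵀ = A * N * X * M := by
    calc M * Xᵀ * N * Aᵀ = M * Xᵀ * N * Aᵀ * M * M := (hMM _).symm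
    _ = A * N * X * M := by rw [h3']
  have hXT : Xᵀ * N * Aᵀ * M * Xᵀ = Xᵀ := by
    conv_rhs => rw [← hX2]
    simp only [Matrix.transpose_mul, hM, hN, ← Matrix.mul_assoc]
  have h3 : A * N * X * Xᵀ * N = M * Xᵀ * N := by
    conv_rhs => rw [← hXT]
    simp only [← Matrix.mul_assoc]
    rw [h2, hMM]
  -- dot product helper
  have dp : ∀ {p q : ℕ} (B : Matrix (Fin p) (Fin q) ℝ) (u : Fin p → ℝ) (y : Fin q → ℝ),
      (Bᵀ *ᵥ u) ⬝ᵥ y = u ⬝ᵥ (B *ᵥ y) := by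
    intro p q B u y
    rw [Matrix.mulVec_transpose, ← Matrix.dotProduct_mulVec]
  -- forward inclusion
  have hsub :
      {u : Fin m → ℝ | ∀ t ∈ (fun x => ((A * N * idMat n) * N) *ᵥ x) '' K, 0 ≤ u ⬝ᵥ (M *ᵥ t)}
        ∩ {y : Fin m → ℝ | ∃ x : Fin n → ℝ, y = ((A * N * idMat n) * N) *ᵥ x}
      ⊆ (fun x => (((M * Xᵀ * N) * N * idMat n) * N) *ᵥ x) ''
          {w : Fin n → ℝ | ∀ t ∈ K, 0 ≤ w ⬝ᵥ (N *ᵥ t)} := by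
    rintro u ⟨hdual, x, hx⟩
    rw [hAN] at hx
    refine ⟨Aᵀ *ᵥ u, ?_, ?_⟩
    · intro t ht
      have h0 : 0 ≤ u ⬝ᵥ (M *ᵥ (A *ᵥ t)) := by
        refine hdual (A *ᵥ t) ⟨t, ht, ?_⟩
        rw [hAN]
      rw [dp]
      calc (0:ℝ) ≤ u ⬝ᵥ (M *ᵥ (A *ᵥ t)) := h0
      _ = u ⬝ᵥ (A *ᵥ (N *ᵥ t)) := by
          rw [Matrix.mulVec_mulVec, Matrix.mulVec_mulVec, hA]
    · show (M * Xᵀ * N * N * idMat n * N) *ᵥ (Aᵀ *ᵥ u) = u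
      rw [hBN, Matrix.mulVec_mulVec, h2, hx, Matrix.mulVec_mulVec, hX1]
  refine ⟨hsub, fun hK => Set.Subset.antisymm hsub ?_⟩
  rintro u ⟨w, hw, hu⟩
  have hu' : (M * Xᵀ * N) *ᵥ w = u := by
    rw [← hBN]; exact hu
  constructor
  · rintro t ⟨s, hs, hts⟩
    have hts' : A *ᵥ s = t := by rw [← hAN]; exact hts
    have hmem : ((X * M * A) * N) *ᵥ s ∈ K := hK ⟨s, hs, rfl⟩
    have h0 : 0 ≤ w ⬝ᵥ (N *ᵥ (((X * M * A) * N) *ᵥ s)) := hw _ hmem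
    have hBT : (M * Xᵀ * N)ᵀᵀ = M * Xᵀ * N := by rw [Matrix.transpose_transpose]
    calc (0:ℝ) ≤ w ⬝ᵥ (N *ᵥ (((X * M * A) * N) *ᵥ s)) := h0
    _ = w ⬝ᵥ ((N * (X * M * A * N)) *ᵥ s) := by rw [Matrix.mulVec_mulVec]
    _ = w ⬝ᵥ ((M * Xᵀ * N)ᵀ *ᵥ ((A * N) *ᵥ s)) := by
        rw [Matrix.mulVec_mulVec]
        congr 1
        simp only [Matrix.transpose_mul, hM, hN, Matrix.transpose_transpose,
          Matrix.mul_assoc]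
    _ = ((M * Xᵀ * N)ᵀᵀ *ᵥ w) ⬝ᵥ ((A * N) *ᵥ s) := by rw [dp]
    _ = u ⬝ᵥ (M *ᵥ t) := by
        rw [hBT, hu', ← hA, ← hts', Matrix.mulVec_mulVec]
  · refine ⟨(N * X * Xᵀ * N) *ᵥ w, ?_⟩
    rw [hAN, Matrix.mulVec_mulVec]
    simp only [← Matrix.mul_assoc]
    rw [h3, hu']
end

section
/- Let A be a real m×n matrix with M A = A N, with indefinite Moore–Penrose inverse A^[†], let G^[†] be the indefinite Moore–Penrose inverse of the Gram matrix A^[*]∘A, let K ⊆ ℝⁿ be a closed cone, and let I be the n×n identity. Then (A^[†])^[*]∘I∘K^[*] ⊆ A∘I∘K + 𝒩((A∘I)^[*]) if and only if G^[†]∘K^[*] ⊆ K + 𝒩(A∘I), where + denotes Minkowski sum. -/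
open Matrix Pointwise

/-- Cancellation: if `Aᵀ * A * B = 0` then `A * B = 0` (real matrices). -/
private lemma transpose_mul_self_cancel {m n p : ℕ} (A : Matrix (Fin m) (Fin n) ℝ)
    (B : Matrix (Fin n) (Fin p) ℝ) (h : Aᵀ * A * B = 0) : A * B = 0 := by
  rw [← Matrix.conjTranspose_eq_transpose_of_trivial] at h
  exact (Matrix.conjTranspose_mul_self_mul_eq_zero A B).mp h

/-- Uniqueness of the indefinite Moore–Penrose inverse. -/
private lemma pinv_unique {m n : ℕ} {M : Matrix (Fin m) (Fin m) ℝ} {N : Matrix (Fin n) (Fin n) ℝ}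
    (hMt : Mᵀ = M) (hMinv : M * M = 1) (hNt : Nᵀ = N) (hNinv : N * N = 1)
    {A : Matrix (Fin m) (Fin n) ℝ} {P Q : Matrix (Fin n) (Fin m) ℝ}
    (hP1 : A * N * P * M * A = A) (hP2 : P * M * A * N * P = P)
    (hP3 : M * (A * N * P)ᵀ * M = A * N * P) (hP4 : N * (P * M * A)ᵀ * N = P * M * A)
    (hQ1 : A * N * Q * M * A = A) (hQ2 : Q * M * A * N * Q = Q)
    (hQ3 : M * (A * N * Q)ᵀ * M = A * N * Q) (hQ4 : N * (Q * M * A)ᵀ * N = Q * M * A) :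
    P = Q := by
  have hMc : ∀ {k : Type} (Y : Matrix (Fin m) k ℝ), M * (M * Y) = Y := by
    intro k Y; rw [← Matrix.mul_assoc, hMinv, Matrix.one_mul]
  have hNc : ∀ {k : Type} (Y : Matrix (Fin n) k ℝ), N * (N * Y) = Y := by
    intro k Y; rw [← Matrix.mul_assoc, hNinv, Matrix.one_mul]
  -- normalized basic hypotheses
  have hP1n : A * (N * (P * (M * A))) = A := by
    simpa only [Matrix.mul_assoc] using hP1
  have hQ1n : A * (N * (Q * (M * A))) = A := by
    simpa only [Matrix.mul_assoc] using hQ1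
  have cP1 : ∀ {k : Type} (Y : Matrix (Fin n) k ℝ),
      A * (N * (P * (M * (A * Y)))) = A * Y := by
    intro k Y
    simpa only [Matrix.mul_assoc] using congrArg (fun Z => Z * Y) hP1
  have cQ1 : ∀ {k : Type} (Y : Matrix (Fin n) k ℝ),
      A * (N * (Q * (M * (A * Y)))) = A * Y := by
    intro k Y
    simpa only [Matrix.mul_assoc] using congrArg (fun Z => Z * Y) hQ1
  have hP3n : M * (Pᵀ * (N * (Aᵀ * M))) = A * (N * P) := by
    simpa only [Matrix.transpose_mul, hMt, hNt, Matrix.mul_assoc] using hP3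
  have hQ3n : M * (Qᵀ * (N * (Aᵀ * M))) = A * (N * Q) := by
    simpa only [Matrix.transpose_mul, hMt, hNt, Matrix.mul_assoc] using hQ3
  have hP3c : ∀ {k : Type} (Y : Matrix (Fin m) k ℝ),
      M * (Pᵀ * (N * (Aᵀ * (M * Y)))) = A * (N * (P * Y)) := by
    intro k Y
    simpa only [Matrix.mul_assoc] using congrArg (fun Z => Z * Y) hP3n
  have hQ3m : Qᵀ * (N * (Aᵀ * M)) = M * (A * (N * Q)) := by
    rw [← hQ3n, hMc]
  -- Step 1 : A∘P = A∘Q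
  have s2 : A * (N * (Q * (M * (A * (N * P))))) = A * (N * P) := cQ1 (N * P)
  have t2 : Pᵀ * (N * Aᵀ) = Pᵀ * (N * (Aᵀ * (M * (Qᵀ * (N * Aᵀ))))) := by
    simpa only [Matrix.transpose_mul, Matrix.transpose_transpose, hMt, hNt,
      Matrix.mul_assoc] using (congrArg Matrix.transpose s2).symm
  have hAP : A * (N * P) = A * (N * Q) := by
    calc A * (N * P) = M * ((Pᵀ * (N * Aᵀ)) * M) := by
          rw [← hP3n]; simp only [Matrix.mul_assoc]
    _ = M * ((Pᵀ * (N * (Aᵀ * (M * (Qᵀ * (N * Aᵀ)))))) * M) := by rw [← t2]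
    _ = M * (Pᵀ * (N * (Aᵀ * (M * (Qᵀ * (N * (Aᵀ * M))))))) := by
          simp only [Matrix.mul_assoc]
    _ = A * (N * (P * (Qᵀ * (N * (Aᵀ * M))))) := hP3c _
    _ = A * (N * (P * (M * (A * (N * Q))))) := by rw [hQ3m]
    _ = A * (N * Q) := cP1 (N * Q)
  -- Step 2 : P∘A = Q∘A
  have hP4n : N * ((P * (M * A))ᵀ * N) = P * (M * A) := by
    simpa only [Matrix.mul_assoc] using hP4
  have hQ4n : N * ((Q * (M * A))ᵀ * N) = Q * (M * A) := by
    simpa only [Matrix.mul_assoc] using hQ4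
  have s3 : (Q * (M * A)) * (N * (P * (M * A))) = Q * (M * A) := by
    simp only [Matrix.mul_assoc, hP1n]
  have s4 : (P * (M * A)) * (N * (Q * (M * A))) = P * (M * A) := by
    simp only [Matrix.mul_assoc, hQ1n]
  have hP4e : N * (Aᵀ * (M * (Pᵀ * N))) = P * (M * A) := by
    simpa only [Matrix.transpose_mul, hMt, hNt, Matrix.mul_assoc] using hP4
  have hQ4e : N * (Aᵀ * (M * (Qᵀ * N))) = Q * (M * A) := by
    simpa only [Matrix.transpose_mul, hMt, hNt, Matrix.mul_assoc] using hQ4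
  have hP4m : Aᵀ * (M * (Pᵀ * N)) = N * (P * (M * A)) := by
    have h := congrArg (fun Z => N * Z) hP4e
    simpa only [hNc] using h
  have hQ4ec : ∀ {k : Type} (Y : Matrix (Fin n) k ℝ),
      N * (Aᵀ * (M * (Qᵀ * (N * Y)))) = Q * (M * (A * Y)) := by
    intro k Y
    simpa only [Matrix.mul_assoc] using congrArg (fun Z => Z * Y) hQ4e
  have s4tc : ∀ {k : Type} (Y : Matrix (Fin n) k ℝ),
      Aᵀ * (M * (Qᵀ * (N * (Aᵀ * (M * (Pᵀ * Y)))))) = Aᵀ * (M * (Pᵀ * Y)) := by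
    intro k Y
    simpa only [Matrix.transpose_mul, hMt, hNt, Matrix.mul_assoc] using
      congrArg (fun Z => Zᵀ * Y) s4
  have hPA : P * (M * A) = Q * (M * A) := by
    calc P * (M * A) = N * (Aᵀ * (M * (Pᵀ * N))) := hP4e.symm
    _ = N * (Aᵀ * (M * (Qᵀ * (N * (Aᵀ * (M * (Pᵀ * N))))))) := by
          conv_lhs => rw [← s4tc]
    _ = N * (Aᵀ * (M * (Qᵀ * (N * (N * (P * (M * A))))))) := by rw [hP4m]
    _ = Q * (M * (A * (N * (P * (M * A))))) := hQ4ec _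
    _ = Q * (M * A) := by rw [hP1n]
  -- conclude
  calc P = P * (M * (A * (N * P))) := by
        simpa only [Matrix.mul_assoc] using hP2.symm
  _ = (P * (M * A)) * (N * P) := by simp only [Matrix.mul_assoc]
  _ = (Q * (M * A)) * (N * P) := by rw [hPA]
  _ = Q * (M * (A * (N * P))) := by simp only [Matrix.mul_assoc]
  _ = Q * (M * (A * (N * Q))) := by rw [hAP]
  _ = Q := by simpa only [Matrix.mul_assoc] using hQ2

/-- Lemma 3.11: `(A^[†])^[*]∘I∘K^[*] ⊆ A∘I∘K + 𝒩((A∘I)^[*])` if and only if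
`(A^[*]∘A)^[†]∘K^[*] ⊆ K + 𝒩(A∘I)`. Here `X = A^[†]`, `G = A^[*]∘A = (N Aᵀ M) M A` is
the Gram matrix with indefinite Moore–Penrose inverse `Gd = G^[†]` (weight `N`),
and `+` is Minkowski sum. -/
theorem dual_image_subset_iff_gram_pinv
    {m n : ℕ} (M : Matrix (Fin m) (Fin m) ℝ) (N : Matrix (Fin n) (Fin n) ℝ)
    (hMsymm : M.IsSymm) (hMinv : M * M = 1)
    (hNsymm : N.IsSymm) (hNinv : N * N = 1)
    (A : Matrix (Fin m) (Fin n) ℝ) (X : Matrix (Fin n) (Fin m) ℝ)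
    (hX1 : A * N * X * M * A = A)
    (hX2 : X * M * A * N * X = X)
    (hX3 : M * (A * N * X)ᵀ * M = A * N * X)
    (hX4 : N * (X * M * A)ᵀ * N = X * M * A)
    (Gd : Matrix (Fin n) (Fin n) ℝ)
    (hG1 : ((N * Aᵀ * M) * M * A) * N * Gd * N * ((N * Aᵀ * M) * M * A) = (N * Aᵀ * M) * M * A)
    (hG2 : Gd * N * ((N * Aᵀ * M) * M * A) * N * Gd = Gd)
    (hG3 : N * (((N * Aᵀ * M) * M * A) * N * Gd)ᵀ * N = ((N * Aᵀ * M) * M * A) * N * Gd)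
    (hG4 : N * (Gd * N * ((N * Aᵀ * M) * M * A))ᵀ * N = Gd * N * ((N * Aᵀ * M) * M * A))
    (hA : M * A = A * N)
    (K : Set (Fin n → ℝ)) (hKclosed : IsClosed K)
    (hKadd : ∀ x ∈ K, ∀ y ∈ K, x + y ∈ K)
    (hKsmul : ∀ x ∈ K, ∀ c : ℝ, 0 ≤ c → c • x ∈ K) :
    (fun x => (((M * Xᵀ * N) * N * idMat n) * N) *ᵥ x) ''
        {w : Fin n → ℝ | ∀ t ∈ K, 0 ≤ w ⬝ᵥ (N *ᵥ t)}
      ⊆ (fun x => ((A * N * idMat n) * N) *ᵥ x) '' K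
        + {w : Fin m → ℝ | ((N * (A * N * idMat n)ᵀ * M) * M) *ᵥ w = 0}
    ↔
    (fun x => (Gd * N) *ᵥ x) '' {w : Fin n → ℝ | ∀ t ∈ K, 0 ≤ w ⬝ᵥ (N *ᵥ t)}
      ⊆ K + {z : Fin n → ℝ | ((A * N * idMat n) * N) *ᵥ z = 0} := by
  have hMt : Mᵀ = M := hMsymm
  have hNt : Nᵀ = N := hNsymm
  have hMc : ∀ {k : Type} (Y : Matrix (Fin m) k ℝ), M * (M * Y) = Y := by
    intro k Y; rw [← Matrix.mul_assoc, hMinv, Matrix.one_mul]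
  have hNc : ∀ {k : Type} (Y : Matrix (Fin n) k ℝ), N * (N * Y) = Y := by
    intro k Y; rw [← Matrix.mul_assoc, hNinv, Matrix.one_mul]
  -- transpose of the intertwining relation
  have hATM : Aᵀ * M = N * Aᵀ := by
    have := congrArg Matrix.transpose hA
    simpa only [Matrix.transpose_mul, hMt, hNt] using this
  have hATMc : ∀ {k : Type} (Y : Matrix (Fin m) k ℝ), Aᵀ * (M * Y) = N * (Aᵀ * Y) := by
    intro k Y
    simpa only [Matrix.mul_assoc] using congrArg (fun Z => Z * Y) hATM
  have hAc : ∀ {k : Type} (Y : Matrix (Fin n) k ℝ), M * (A * Y) = A * (N * Y) := by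
    intro k Y
    simpa only [Matrix.mul_assoc] using congrArg (fun Z => Z * Y) hA
  -- the Gram matrix
  have hsym : (Aᵀ * A) * N = N * (Aᵀ * A) := by
    calc (Aᵀ * A) * N = Aᵀ * (A * N) := by simp only [Matrix.mul_assoc]
    _ = Aᵀ * (M * A) := by rw [← hA]
    _ = N * (Aᵀ * A) := hATMc A
  obtain ⟨G, hGdef⟩ : ∃ G : Matrix (Fin n) (Fin n) ℝ, G = N * (Aᵀ * A) := ⟨_, rfl⟩
  have hGm : (N * Aᵀ * M) * M * A = G := by
    rw [hGdef]; simp only [Matrix.mul_assoc, hMc]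
  rw [hGm] at hG1 hG2 hG3 hG4
  have hNG : N * G = Aᵀ * A := by rw [hGdef]; exact hNc _
  have hGN2 : G * N = Aᵀ * A := by
    rw [hGdef]
    calc (N * (Aᵀ * A)) * N = N * ((Aᵀ * A) * N) := by simp only [Matrix.mul_assoc]
    _ = N * (N * (Aᵀ * A)) := by rw [hsym]
    _ = Aᵀ * A := hNc _
  have hGt : Gᵀ = G := by
    rw [hGdef]
    calc (N * (Aᵀ * A))ᵀ = (Aᵀ * A) * N := by
          simp only [Matrix.transpose_mul, Matrix.transpose_transpose, hNt, Matrix.mul_assoc]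
    _ = N * (Aᵀ * A) := hsym
  have hNGb : N * G = G * N := by rw [hNG, hGN2]
  have hNGc : ∀ {k : Type} (Y : Matrix (Fin n) k ℝ), N * (G * Y) = G * (N * Y) := by
    intro k Y
    simpa only [Matrix.mul_assoc] using congrArg (fun Z => Z * Y) hNGb
  have hNGN : N * (G * N) = G := by rw [hGN2, hGdef]
  -- derived facts about Gd
  have d1 : G * (Gd * G) = G := by
    have h := congrArg (fun Z => N * (Z * N)) hG1
    simpa only [Matrix.mul_assoc, hNGc, hNc, hNinv, Matrix.mul_one] using h
  have d2 : Gd * (G * Gd) = Gd := by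
    simpa only [Matrix.mul_assoc, hNGc, hNc] using hG2
  have d3 : Gdᵀ * G = G * Gd := by
    have h := congrArg (fun Z => N * Z) hG3
    simpa only [Matrix.transpose_mul, hNt, hGt, Matrix.mul_assoc, hNGc, hNc, hNinv,
      Matrix.mul_one] using h
  have d4 : G * Gdᵀ = Gd * G := by
    have h := congrArg (fun Z => Z * N) hG4
    simpa only [Matrix.transpose_mul, hNt, hGt, Matrix.mul_assoc, hNGc, hNc, hNinv,
      Matrix.mul_one] using h
  have d1t : G * (Gdᵀ * G) = G := by
    have h := congrArg Matrix.transpose d1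
    simpa only [Matrix.transpose_mul, hGt, Matrix.mul_assoc] using h
  have d2t : Gdᵀ * (G * Gdᵀ) = Gdᵀ := by
    have h := congrArg Matrix.transpose d2
    simpa only [Matrix.transpose_mul, hGt, Matrix.mul_assoc] using h
  have d3c : ∀ {k : Type} (Y : Matrix (Fin n) k ℝ), Gdᵀ * (G * Y) = G * (Gd * Y) := by
    intro k Y
    simpa only [Matrix.mul_assoc] using congrArg (fun Z => Z * Y) d3
  have d4c : ∀ {k : Type} (Y : Matrix (Fin n) k ℝ), G * (Gdᵀ * Y) = Gd * (G * Y) := by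
    intro k Y
    simpa only [Matrix.mul_assoc] using congrArg (fun Z => Z * Y) d4
  -- App 1 : Gd = N * (Gd * N)
  have hGdNN : Gd = N * (Gd * N) := by
    refine pinv_unique hNt hNinv hNt hNinv hG1 hG2 hG3 hG4 ?_ ?_ ?_ ?_
    · -- G * N * (N * (Gd * N)) * N * G = G
      simp only [Matrix.mul_assoc, hNc, d1]
    · -- (N * (Gd * N)) * N * G * N * (N * (Gd * N)) = N * (Gd * N)
      have h := congrArg (fun Z => N * (Z * N)) d2
      simpa only [Matrix.mul_assoc, hNc] using h
    · -- N * (G * N * (N * (Gd * N)))ᵀ * N = G * N * (N * (Gd * N))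
      simp only [Matrix.transpose_mul, hNt, hGt, Matrix.mul_assoc, hNc, hNinv,
        Matrix.mul_one, d3c]
    · -- N * ((N * (Gd * N)) * N * G)ᵀ * N = (N * (Gd * N)) * N * G
      simp only [Matrix.transpose_mul, hNt, hGt, Matrix.mul_assoc, hNc, hNinv,
        Matrix.mul_one]
      rw [show N * (G * Gdᵀ) = N * (Gd * G) from by rw [d4]]
  -- App 2 : Gd = N * (Gdᵀ * N)
  have hGdNN2 : Gd = N * (Gdᵀ * N) := by
    refine pinv_unique hNt hNinv hNt hNinv hG1 hG2 hG3 hG4 ?_ ?_ ?_ ?_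
    · simp only [Matrix.mul_assoc, hNc, d1t]
    · have h := congrArg (fun Z => N * (Z * N)) d2t
      simpa only [Matrix.mul_assoc, hNc] using h
    · simp only [Matrix.transpose_mul, hNt, hGt, Matrix.transpose_transpose,
        Matrix.mul_assoc, hNc, hNinv, Matrix.mul_one, d4c]
    · simp only [Matrix.transpose_mul, hNt, hGt, Matrix.transpose_transpose,
        Matrix.mul_assoc, hNc, hNinv, Matrix.mul_one]
      rw [show N * (G * Gd) = N * (Gdᵀ * G) from by rw [d3]]
  have hGdt : Gdᵀ = Gd := by
    have e : N * (Gdᵀ * N) = N * (Gd * N) := hGdNN2.symm.trans hGdNN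
    have h := congrArg (fun Z => N * (Z * N)) e
    simpa only [Matrix.mul_assoc, hNc, hNinv, Matrix.mul_one] using h
  have hNGd : N * Gd = Gd * N := by
    have h := congrArg (fun Z => N * Z) hGdNN
    simpa only [hNc] using h
  have hGdNc : ∀ {k : Type} (Y : Matrix (Fin n) k ℝ), Gd * (N * Y) = N * (Gd * Y) := by
    intro k Y
    simpa only [Matrix.mul_assoc] using congrArg (fun Z => Z * Y) hNGd.symm
  have hAAG : Aᵀ * A = N * G := hNG.symm
  have hAAGc : ∀ {k : Type} (Y : Matrix (Fin n) k ℝ), Aᵀ * (A * Y) = N * (G * Y) := by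
    intro k Y
    simpa only [Matrix.mul_assoc] using congrArg (fun Z => Z * Y) hAAG
  -- cancellation : A * (Gd * G) = A
  have e1 : A * (Gd * G) = A := by
    have h0 : Aᵀ * A * (Gd * G - 1) = 0 := by
      rw [Matrix.mul_sub, Matrix.mul_one, sub_eq_zero, hAAG]
      calc (N * G) * (Gd * G) = N * (G * (Gd * G)) := by simp only [Matrix.mul_assoc]
      _ = N * G := by rw [d1]
    have h1 := transpose_mul_self_cancel A _ h0
    rw [Matrix.mul_sub, Matrix.mul_one, sub_eq_zero] at h1
    exact h1
  -- App 3 : X = Gd * (Aᵀ * M)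
  have hG2c : ∀ {k : Type} (Y : Matrix (Fin n) k ℝ),
      Gd * (N * (G * (N * (Gd * Y)))) = Gd * Y := by
    intro k Y
    simpa only [Matrix.mul_assoc] using congrArg (fun Z => Z * Y) hG2
  have hXY : X = Gd * (Aᵀ * M) := by
    refine pinv_unique hMt hMinv hNt hNinv hX1 hX2 hX3 hX4 ?_ ?_ ?_ ?_
    · -- A * N * (Gd * (Aᵀ * M)) * M * A = A
      calc A * N * (Gd * (Aᵀ * M)) * M * A
          = A * (N * (Gd * (Aᵀ * (M * (M * A))))) := by simp only [Matrix.mul_assoc]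
      _ = A * (N * (Gd * (Aᵀ * A))) := by rw [hMc]
      _ = A * (N * (Gd * (N * G))) := by rw [hAAG]
      _ = A * (N * (N * (Gd * G))) := by rw [hGdNc]
      _ = A * (Gd * G) := by rw [hNc]
      _ = A := e1
    · -- (Gd * (Aᵀ * M)) * M * A * N * (Gd * (Aᵀ * M)) = Gd * (Aᵀ * M)
      calc (Gd * (Aᵀ * M)) * M * A * N * (Gd * (Aᵀ * M))
          = Gd * (Aᵀ * (M * (M * (A * (N * (Gd * (Aᵀ * M))))))) := by
            simp only [Matrix.mul_assoc]
      _ = Gd * (Aᵀ * (A * (N * (Gd * (Aᵀ * M))))) := by rw [hMc]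
      _ = Gd * (N * (G * (N * (Gd * (Aᵀ * M))))) := by rw [hAAGc]
      _ = Gd * (Aᵀ * M) := hG2c _
    · -- M * (A * N * (Gd * (Aᵀ * M)))ᵀ * M = A * N * (Gd * (Aᵀ * M))
      have lhs : M * (A * N * (Gd * (Aᵀ * M)))ᵀ * M = A * (Gd * Aᵀ) := by
        simp only [Matrix.transpose_mul, Matrix.transpose_transpose, hMt, hNt, hGdt,
          Matrix.mul_assoc, hMc, hAc, hATM, hATMc, hNc]
      have rhs : A * N * (Gd * (Aᵀ * M)) = A * (Gd * Aᵀ) := by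
        calc A * N * (Gd * (Aᵀ * M)) = A * (N * (Gd * (N * Aᵀ))) := by
              rw [hATM]; simp only [Matrix.mul_assoc]
        _ = A * (N * (N * (Gd * Aᵀ))) := by rw [hGdNc]
        _ = A * (Gd * Aᵀ) := by rw [hNc]
      rw [lhs, rhs]
    · -- N * ((Gd * (Aᵀ * M)) * M * A)ᵀ * N = (Gd * (Aᵀ * M)) * M * A
      have rhs : (Gd * (Aᵀ * M)) * M * A = N * (Gd * G) := by
        calc (Gd * (Aᵀ * M)) * M * A = Gd * (Aᵀ * (M * (M * A))) := by
              simp only [Matrix.mul_assoc]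
        _ = Gd * (Aᵀ * A) := by rw [hMc]
        _ = Gd * (N * G) := by rw [hAAG]
        _ = N * (Gd * G) := by rw [hGdNc]
      rw [rhs]
      have dcomm : Gd * G = G * Gd := by
        have h := d3
        rw [hGdt] at h
        exact h
      calc N * (N * (Gd * G))ᵀ * N = N * (Gᵀ * (Gdᵀ * (N * N))) := by
            simp only [Matrix.transpose_mul, hNt, Matrix.mul_assoc]
      _ = N * (G * Gd) := by rw [hNinv, Matrix.mul_one, hGt, hGdt]
      _ = N * (Gd * G) := by rw [dcomm]
  -- simplify the three matrices appearing in the statement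
  have hL : ((M * Xᵀ * N) * N * idMat n) * N = A * (Gd * N) := by
    rw [hXY]
    simp only [idMat, Matrix.mul_one, Matrix.transpose_mul, Matrix.transpose_transpose,
      hMt, hGdt, Matrix.mul_assoc, hMc, hNc]
  have hR : (A * N * idMat n) * N = A := by
    simp only [idMat, Matrix.mul_one, Matrix.mul_assoc, hNinv]
  have hT : (N * (A * N * idMat n)ᵀ * M) * M = Aᵀ := by
    simp only [idMat, Matrix.mul_one, Matrix.transpose_mul, hNt, Matrix.mul_assoc,
      hNc, hMinv, hMc]
  simp only [hL, hR, hT]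
  -- the kernel fact
  have hker : ∀ v : Fin n → ℝ, Aᵀ *ᵥ (A *ᵥ v) = 0 → A *ᵥ v = 0 := by
    intro v hv
    have h1 : (A *ᵥ v) ⬝ᵥ (A *ᵥ v) = 0 := by
      rw [Matrix.dotProduct_mulVec, ← Matrix.mulVec_transpose, hv, zero_dotProduct]
    exact dotProduct_self_eq_zero.mp h1
  constructor
  · intro h
    rintro _ ⟨w, hw, rfl⟩
    have hmem := h (Set.mem_image_of_mem _ hw)
    rw [Set.mem_add] at hmem
    obtain ⟨u, hu, z, hz, huz⟩ := hmem
    obtain ⟨k, hk, rfl⟩ := hu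
    have hz' : Aᵀ *ᵥ z = 0 := hz
    have hAv : A *ᵥ ((Gd * N) *ᵥ w) = (A * (Gd * N)) *ᵥ w := Matrix.mulVec_mulVec _ _ _
    have hzv : z = A *ᵥ ((Gd * N) *ᵥ w) - A *ᵥ k := by
      rw [hAv]
      exact eq_sub_of_add_eq' huz
    have hz0 : A *ᵥ ((Gd * N) *ᵥ w - k) = 0 := by
      apply hker
      rw [Matrix.mulVec_sub, ← hzv, hz']
    rw [Set.mem_add]
    refine ⟨k, hk, (Gd * N) *ᵥ w - k, hz0, ?_⟩
    abel
  · intro h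
    rintro _ ⟨w, hw, rfl⟩
    have hmem := h (Set.mem_image_of_mem _ hw)
    rw [Set.mem_add] at hmem
    obtain ⟨k, hk, z, hz, hkz⟩ := hmem
    have hz' : A *ᵥ z = 0 := hz
    rw [Set.mem_add]
    refine ⟨A *ᵥ k, Set.mem_image_of_mem _ hk, 0, ?_, ?_⟩
    · show Aᵀ *ᵥ (0 : Fin m → ℝ) = 0
      exact Matrix.mulVec_zero _
    · show A *ᵥ k + 0 = (A * (Gd * N)) *ᵥ w
      rw [add_zero, ← Matrix.mulVec_mulVec, ← hkz, Matrix.mulVec_add, hz', add_zero]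
end

section
/- Let A be a real m×n matrix with M A = A N, with indefinite Moore–Penrose inverse A^[†], let G^[†] be the indefinite Moore–Penrose inverse of the Gram matrix A^[*]∘A, let K ⊆ ℝⁿ be a closed cone, and let I be the n×n identity. If (A^[†])^[*]∘I∘K^[*] ⊆ A∘I∘K, then G^[†]∘K^[*] ⊆ K + 𝒩(A∘I), where + denotes Minkowski sum. -/
open Matrix Pointwise

/-- Uniqueness of the (ordinary) Moore–Penrose inverse. -/
theorem mp_unique' {p q : ℕ} {B : Matrix (Fin p) (Fin q) ℝ} {Y Z : Matrix (Fin q) (Fin p) ℝ}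
    (hY1 : B * Y * B = B) (hY2 : Y * B * Y = Y)
    (hY3 : (B * Y)ᵀ = B * Y) (hY4 : (Y * B)ᵀ = Y * B)
    (hZ1 : B * Z * B = B) (hZ2 : Z * B * Z = Z)
    (hZ3 : (B * Z)ᵀ = B * Z) (hZ4 : (Z * B)ᵀ = Z * B) :
    Y = Z := by
  have hY1' : B * (Y * B) = B := by rw [← Matrix.mul_assoc]; exact hY1
  have hBYZ : B * Y = B * Z := by
    calc B * Y = (B * Y)ᵀ := hY3.symm
      _ = ((B * Z * B) * Y)ᵀ := by rw [hZ1]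
      _ = ((B * Z) * (B * Y))ᵀ := by rw [Matrix.mul_assoc (B * Z) B Y]
      _ = (B * Y)ᵀ * (B * Z)ᵀ := by rw [Matrix.transpose_mul]
      _ = (B * Y) * (B * Z) := by rw [hY3, hZ3]
      _ = (B * Y * B) * Z := by simp only [Matrix.mul_assoc]
      _ = B * Z := by rw [hY1]
  have hYZB : Y * B = Z * B := by
    calc Y * B = (Y * B)ᵀ := hY4.symm
      _ = (Y * (B * Z * B))ᵀ := by rw [hZ1]
      _ = ((Y * B) * (Z * B))ᵀ := by simp only [Matrix.mul_assoc]
      _ = (Z * B)ᵀ * (Y * B)ᵀ := by rw [Matrix.transpose_mul]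
      _ = (Z * B) * (Y * B) := by rw [hY4, hZ4]
      _ = Z * (B * (Y * B)) := by simp only [Matrix.mul_assoc]
      _ = Z * B := by rw [hY1']
  calc Y = Y * B * Y := hY2.symm
    _ = (Z * B) * Y := by rw [hYZB]
    _ = Z * (B * Y) := by rw [Matrix.mul_assoc]
    _ = Z * (B * Z) := by rw [hBYZ]
    _ = Z * B * Z := by rw [Matrix.mul_assoc]
    _ = Z := hZ2


/-- Lemma 3.12: if `(A^[†])^[*]∘I∘K^[*] ⊆ A∘I∘K`, then
`(A^[*]∘A)^[†]∘K^[*] ⊆ K + 𝒩(A∘I)`. Here `X = A^[†]`, `Gd = (A^[*]∘A)^[†]` is the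
indefinite Moore–Penrose inverse (weight `N`) of the Gram matrix
`A^[*]∘A = (N Aᵀ M) M A`, and `+` is Minkowski sum. -/
theorem dual_image_subset_image_implies_gram_pinv
    {m n : ℕ} (M : Matrix (Fin m) (Fin m) ℝ) (N : Matrix (Fin n) (Fin n) ℝ)
    (hMsymm : M.IsSymm) (hMinv : M * M = 1)
    (hNsymm : N.IsSymm) (hNinv : N * N = 1)
    (A : Matrix (Fin m) (Fin n) ℝ) (X : Matrix (Fin n) (Fin m) ℝ)
    (hX1 : A * N * X * M * A = A)
    (hX2 : X * M * A * N * X = X)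
    (hX3 : M * (A * N * X)ᵀ * M = A * N * X)
    (hX4 : N * (X * M * A)ᵀ * N = X * M * A)
    (Gd : Matrix (Fin n) (Fin n) ℝ)
    (hG1 : ((N * Aᵀ * M) * M * A) * N * Gd * N * ((N * Aᵀ * M) * M * A) = (N * Aᵀ * M) * M * A)
    (hG2 : Gd * N * ((N * Aᵀ * M) * M * A) * N * Gd = Gd)
    (hG3 : N * (((N * Aᵀ * M) * M * A) * N * Gd)ᵀ * N = ((N * Aᵀ * M) * M * A) * N * Gd)
    (hG4 : N * (Gd * N * ((N * Aᵀ * M) * M * A))ᵀ * N = Gd * N * ((N * Aᵀ * M) * M * A))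
    (hA : M * A = A * N)
    (K : Set (Fin n → ℝ)) (hKclosed : IsClosed K)
    (hKadd : ∀ x ∈ K, ∀ y ∈ K, x + y ∈ K)
    (hKsmul : ∀ x ∈ K, ∀ c : ℝ, 0 ≤ c → c • x ∈ K)
    (h : (fun x => (((M * Xᵀ * N) * N * idMat n) * N) *ᵥ x) ''
          {w : Fin n → ℝ | ∀ t ∈ K, 0 ≤ w ⬝ᵥ (N *ᵥ t)}
        ⊆ (fun x => ((A * N * idMat n) * N) *ᵥ x) '' K) :
    (fun x => (Gd * N) *ᵥ x) '' {w : Fin n → ℝ | ∀ t ∈ K, 0 ≤ w ⬝ᵥ (N *ᵥ t)}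
      ⊆ K + {z : Fin n → ℝ | ((A * N * idMat n) * N) *ᵥ z = 0} := by
  -- pushing lemmas
  have hMM : ∀ {k : ℕ} (Z : Matrix (Fin m) (Fin k) ℝ), M * (M * Z) = Z := fun Z => by
    rw [← Matrix.mul_assoc, hMinv, Matrix.one_mul]
  have hNN : ∀ {k : ℕ} (Z : Matrix (Fin n) (Fin k) ℝ), N * (N * Z) = Z := fun Z => by
    rw [← Matrix.mul_assoc, hNinv, Matrix.one_mul]
  have hMA : ∀ {k : ℕ} (Z : Matrix (Fin n) (Fin k) ℝ), M * (A * Z) = A * (N * Z) := fun Z => by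
    rw [← Matrix.mul_assoc, hA, Matrix.mul_assoc]
  have hNAt : N * Aᵀ = Aᵀ * M := by
    have := congrArg Matrix.transpose hA
    simpa [Matrix.transpose_mul, hMsymm.eq, hNsymm.eq] using this.symm
  have hNAtZ : ∀ {k : ℕ} (Z : Matrix (Fin m) (Fin k) ℝ), N * (Aᵀ * Z) = Aᵀ * (M * Z) := fun Z => by
    rw [← Matrix.mul_assoc, hNAt, Matrix.mul_assoc]
  -- ordinary MP equations for X
  have ho1 : A * X * A = A := by
    have key : M * (A * N * X * M * A) * N = A := by
      rw [hX1, hA, Matrix.mul_assoc, hNinv, Matrix.mul_one]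
    calc A * X * A = M * (A * N * X * M * A) * N := by
          simp only [Matrix.mul_assoc, hMA, hNN, hMM, hNinv, Matrix.mul_one]
      _ = A := key
  have ho2 : X * A * X = X := by
    have h2 := hX2
    simp only [Matrix.mul_assoc] at h2 ⊢
    simp only [hMA, hNN] at h2
    exact h2
  have ho3 : (A * X)ᵀ = A * X := by
    have h3 := congrArg (fun Z => M * Z * M) hX3
    simp only [Matrix.transpose_mul, hMsymm.eq, hNsymm.eq, Matrix.mul_assoc, hMA, hNAtZ, hMM, hNN,
      hMinv, hNinv, Matrix.mul_one] at h3 ⊢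
    have h3' := congrArg (fun Z => Z * M) h3
    simp only [Matrix.mul_assoc, hMinv, Matrix.mul_one] at h3'
    exact h3'
  have ho4 : (X * A)ᵀ = X * A := by
    have h4 := congrArg (fun Z => N * Z * N) hX4
    simp only [Matrix.transpose_mul, hMsymm.eq, hNsymm.eq, Matrix.mul_assoc, hMA, hNAtZ, hMM, hNN,
      hMinv, hNinv, Matrix.mul_one] at h4 ⊢
    have h4' := congrArg (fun Z => N * Z) h4
    simp only [Matrix.mul_assoc, hNAtZ, hMM, hNN] at h4'
    exact h4'
  -- ordinary MP equations for N*X*M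
  have hp1 : A * (N * X * M) * A = A := by
    simp only [Matrix.mul_assoc] at hX1 ⊢; exact hX1
  have hp2 : (N * X * M) * A * (N * X * M) = N * X * M := by
    have h2 := congrArg (fun Z => N * Z * M) hX2
    simp only [Matrix.mul_assoc, hMM, hNN] at h2 ⊢
    exact h2
  have hp3 : (A * (N * X * M))ᵀ = A * (N * X * M) := by
    have h3 := congrArg (fun Z => Z * M) hX3
    simp only [Matrix.transpose_mul, hMsymm.eq, hNsymm.eq, Matrix.mul_assoc, hMM, hNN,
      hMinv, hNinv, Matrix.mul_one] at h3 ⊢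
    exact h3
  have hp4 : ((N * X * M) * A)ᵀ = (N * X * M) * A := by
    have h4 := congrArg (fun Z => N * Z) hX4
    simp only [Matrix.transpose_mul, hMsymm.eq, hNsymm.eq, Matrix.mul_assoc, hMM, hNN,
      hMinv, hNinv, Matrix.mul_one] at h4 ⊢
    exact h4
  have hXNM : X = N * X * M := mp_unique' ho1 ho2 ho3 ho4 hp1 hp2 hp3 hp4
  -- consequences
  have hXt : M * (Xᵀ * N) = Xᵀ := by
    have := congrArg Matrix.transpose hXNM
    simp only [Matrix.transpose_mul, hMsymm.eq, hNsymm.eq, Matrix.mul_assoc] at this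
    exact this.symm
  -- derived ordinary algebra rules
  have r1 : Xᵀ * Aᵀ = A * X := by rw [← Matrix.transpose_mul, ho3]
  have r1Z : ∀ {k : ℕ} (Z : Matrix (Fin m) (Fin k) ℝ), Xᵀ * (Aᵀ * Z) = A * (X * Z) := fun Z => by
    rw [← Matrix.mul_assoc, r1, Matrix.mul_assoc]
  have r2 : Aᵀ * Xᵀ = X * A := by rw [← Matrix.transpose_mul, ho4]
  have r2Z : ∀ {k : ℕ} (Z : Matrix (Fin n) (Fin k) ℝ), Aᵀ * (Xᵀ * Z) = X * (A * Z) := fun Z => by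
    rw [← Matrix.mul_assoc, r2, Matrix.mul_assoc]
  have c1 : A * (X * A) = A := by rw [← Matrix.mul_assoc]; exact ho1
  have c1Z : ∀ {k : ℕ} (Z : Matrix (Fin n) (Fin k) ℝ), A * (X * (A * Z)) = A * Z := fun Z => by
    rw [← Matrix.mul_assoc, ← Matrix.mul_assoc, ho1]
  have c2 : X * (A * X) = X := by rw [← Matrix.mul_assoc]; exact ho2
  have c2Z : ∀ {k : ℕ} (Z : Matrix (Fin m) (Fin k) ℝ), X * (A * (X * Z)) = X * Z := fun Z => by
    rw [← Matrix.mul_assoc, ← Matrix.mul_assoc, ho2]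
  have a1 : A * (X * Xᵀ) = Xᵀ := by
    calc A * (X * Xᵀ) = (A * X) * Xᵀ := (Matrix.mul_assoc A X Xᵀ).symm
      _ = (A * X)ᵀ * Xᵀ := by rw [ho3]
      _ = (X * (A * X))ᵀ := by rw [← Matrix.transpose_mul]
      _ = Xᵀ := by rw [c2]
  have a1Z : ∀ {k : ℕ} (Z : Matrix (Fin n) (Fin k) ℝ), A * (X * (Xᵀ * Z)) = Xᵀ * Z := fun Z => by
    rw [← Matrix.mul_assoc, ← Matrix.mul_assoc, Matrix.mul_assoc A X Xᵀ, a1]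
  have b1 : X * (A * Aᵀ) = Aᵀ := by
    calc X * (A * Aᵀ) = (X * A) * Aᵀ := (Matrix.mul_assoc X A Aᵀ).symm
      _ = (X * A)ᵀ * Aᵀ := by rw [ho4]
      _ = (A * (X * A))ᵀ := by rw [← Matrix.transpose_mul]
      _ = Aᵀ := by rw [c1]
  have b1Z : ∀ {k : ℕ} (Z : Matrix (Fin m) (Fin k) ℝ), X * (A * (Aᵀ * Z)) = Aᵀ * Z := fun Z => by
    rw [← Matrix.mul_assoc, ← Matrix.mul_assoc, Matrix.mul_assoc X A Aᵀ, b1]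
  -- X*Xᵀ satisfies the MP equations for B := Aᵀ*A
  have s1 : (Aᵀ * A) * (X * Xᵀ) * (Aᵀ * A) = Aᵀ * A := by
    simp only [Matrix.mul_assoc, r1Z, r1, r2Z, r2, c1Z, c1, c2Z, c2, a1Z, a1, b1Z, b1]
  have s2 : (X * Xᵀ) * (Aᵀ * A) * (X * Xᵀ) = X * Xᵀ := by
    simp only [Matrix.mul_assoc, r1Z, r1, r2Z, r2, c1Z, c1, c2Z, c2, a1Z, a1, b1Z, b1]
  have s3 : ((Aᵀ * A) * (X * Xᵀ))ᵀ = (Aᵀ * A) * (X * Xᵀ) := by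
    simp only [Matrix.transpose_mul, Matrix.transpose_transpose, Matrix.mul_assoc,
      r1Z, r1, r2Z, r2, c1Z, c1, c2Z, c2, a1Z, a1, b1Z, b1]
  have s4 : ((X * Xᵀ) * (Aᵀ * A))ᵀ = (X * Xᵀ) * (Aᵀ * A) := by
    simp only [Matrix.transpose_mul, Matrix.transpose_transpose, Matrix.mul_assoc,
      r1Z, r1, r2Z, r2, c1Z, c1, c2Z, c2, a1Z, a1, b1Z, b1]
  -- Gd*N satisfies the MP equations for Aᵀ*A
  have y1 : (Aᵀ * A) * (Gd * N) * (Aᵀ * A) = Aᵀ * A := by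
    have e := congrArg (fun Z => Z * N) hG1
    simp only [Matrix.mul_assoc, Matrix.transpose_mul, Matrix.transpose_transpose,
      hMsymm.eq, hNsymm.eq, hA, hMA, hNAt, hNAtZ, hMM, hNN, hMinv, hNinv,
      Matrix.mul_one, Matrix.one_mul] at e ⊢
    exact e
  have y2 : (Gd * N) * (Aᵀ * A) * (Gd * N) = Gd * N := by
    have e := congrArg (fun Z => Z * N) hG2
    simp only [Matrix.mul_assoc, Matrix.transpose_mul, Matrix.transpose_transpose,
      hMsymm.eq, hNsymm.eq, hA, hMA, hNAt, hNAtZ, hMM, hNN, hMinv, hNinv,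
      Matrix.mul_one, Matrix.one_mul] at e ⊢
    exact e
  have y3 : ((Aᵀ * A) * (Gd * N))ᵀ = (Aᵀ * A) * (Gd * N) := by
    have e := congrArg (fun Z => Z * N) hG3
    simp only [Matrix.mul_assoc, Matrix.transpose_mul, Matrix.transpose_transpose,
      hMsymm.eq, hNsymm.eq, hA, hMA, hNAt, hNAtZ, hMM, hNN, hMinv, hNinv,
      Matrix.mul_one, Matrix.one_mul] at e ⊢
    exact e
  have y4 : ((Gd * N) * (Aᵀ * A))ᵀ = (Gd * N) * (Aᵀ * A) := by
    have e := congrArg (fun Z => Z * N) hG4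
    simp only [Matrix.mul_assoc, Matrix.transpose_mul, Matrix.transpose_transpose,
      hMsymm.eq, hNsymm.eq, hA, hMA, hNAt, hNAtZ, hMM, hNN, hMinv, hNinv,
      Matrix.mul_one, Matrix.one_mul] at e ⊢
    exact e
  have hGdN : Gd * N = X * Xᵀ := mp_unique' y1 y2 y3 y4 s1 s2 s3 s4
  have hAGdN : A * (Gd * N) = Xᵀ := by rw [hGdN, a1]
  -- simplify the matrices appearing in the statement
  have hAmat : (A * N * idMat n) * N = A := by
    simp only [idMat, Matrix.mul_one, Matrix.mul_assoc, hNinv]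
  have hXmat : ((M * Xᵀ * N) * N * idMat n) * N = Xᵀ := by
    simp only [idMat, Matrix.mul_one, Matrix.mul_assoc, hNinv, hNN, hXt]
  simp only [hAmat, hXmat] at h ⊢
  rintro v ⟨w, hw, rfl⟩
  obtain ⟨k, hk, hke⟩ := h ⟨w, hw, rfl⟩
  have hke' : A *ᵥ k = Xᵀ *ᵥ w := hke
  refine Set.mem_add.mpr ⟨k, hk, (Gd * N) *ᵥ w - k, ?_, by abel⟩
  show A *ᵥ ((Gd * N) *ᵥ w - k) = 0
  have h1 : A *ᵥ ((Gd * N) *ᵥ w) = Xᵀ *ᵥ w := by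
    rw [Matrix.mulVec_mulVec, hAGdN]
  rw [Matrix.mulVec_sub, h1, hke', sub_self]
end

section
/- Let A be a real m×n matrix with M A = A N, let G^[†] be the indefinite Moore–Penrose inverse of the Gram matrix A^[*]∘A, let K ⊆ ℝⁿ be a closed cone, and let I be the n×n identity. If G^[†]∘K^[*] ⊆ K + 𝒩(A∘I), then K^[*] ∩ R((A∘I)^[*]) ⊆ A^[*]∘A∘K + 𝒩(A∘I), where + denotes Minkowski sum. -/
open Matrix Pointwise

lemma aux_cancel {m n : ℕ} (A : Matrix (Fin m) (Fin n) ℝ) (u : Fin n → ℝ)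
    (h : Aᵀ *ᵥ (A *ᵥ u) = 0) : A *ᵥ u = 0 := by
  have h2 : (A *ᵥ u) ⬝ᵥ (A *ᵥ u) = 0 := by
    rw [dotProduct_mulVec, ← Matrix.mulVec_transpose, h]
    simp
  exact dotProduct_self_eq_zero.mp h2

/-- Lemma 3.13: if `(A^[*]∘A)^[†]∘K^[*] ⊆ K + 𝒩(A∘I)`, then
`K^[*] ∩ R((A∘I)^[*]) ⊆ A^[*]∘A∘K + 𝒩(A∘I)`. Here `Gd = (A^[*]∘A)^[†]` is the
indefinite Moore–Penrose inverse (weight `N`) of the Gram matrix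
`A^[*]∘A = (N Aᵀ M) M A`, and `+` is Minkowski sum. -/
theorem gram_pinv_implies_dual_inter_range
    {m n : ℕ} (M : Matrix (Fin m) (Fin m) ℝ) (N : Matrix (Fin n) (Fin n) ℝ)
    (hMsymm : M.IsSymm) (hMinv : M * M = 1)
    (hNsymm : N.IsSymm) (hNinv : N * N = 1)
    (A : Matrix (Fin m) (Fin n) ℝ)
    (Gd : Matrix (Fin n) (Fin n) ℝ)
    (hG1 : ((N * Aᵀ * M) * M * A) * N * Gd * N * ((N * Aᵀ * M) * M * A) = (N * Aᵀ * M) * M * A)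
    (hG2 : Gd * N * ((N * Aᵀ * M) * M * A) * N * Gd = Gd)
    (hG3 : N * (((N * Aᵀ * M) * M * A) * N * Gd)ᵀ * N = ((N * Aᵀ * M) * M * A) * N * Gd)
    (hG4 : N * (Gd * N * ((N * Aᵀ * M) * M * A))ᵀ * N = Gd * N * ((N * Aᵀ * M) * M * A))
    (hA : M * A = A * N)
    (K : Set (Fin n → ℝ)) (hKclosed : IsClosed K)
    (hKadd : ∀ x ∈ K, ∀ y ∈ K, x + y ∈ K)
    (hKsmul : ∀ x ∈ K, ∀ c : ℝ, 0 ≤ c → c • x ∈ K)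
    (h : (fun x => (Gd * N) *ᵥ x) '' {w : Fin n → ℝ | ∀ t ∈ K, 0 ≤ w ⬝ᵥ (N *ᵥ t)}
        ⊆ K + {z : Fin n → ℝ | ((A * N * idMat n) * N) *ᵥ z = 0}) :
    {w : Fin n → ℝ | ∀ t ∈ K, 0 ≤ w ⬝ᵥ (N *ᵥ t)}
        ∩ {y : Fin n → ℝ | ∃ x : Fin m → ℝ, y = ((N * (A * N * idMat n)ᵀ * M) * M) *ᵥ x}
      ⊆ (fun x => (((N * Aᵀ * M) * M * A) * N) *ᵥ x) '' K
        + {z : Fin n → ℝ | ((A * N * idMat n) * N) *ᵥ z = 0} := by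
  have hNsy : Nᵀ = N := hNsymm
  -- simplify the Gram matrix
  have hG : (N * Aᵀ * M) * M * A = N * Aᵀ * A := by
    rw [Matrix.mul_assoc (N * Aᵀ) M M, hMinv, Matrix.mul_one]
  rw [hG] at hG1 hG3 ⊢
  set G : Matrix (Fin n) (Fin n) ℝ := N * Aᵀ * A with hGdef
  set P : Matrix (Fin n) (Fin n) ℝ := G * N * Gd * N with hPdef
  have hANN : (A * N * idMat n) * N = A := by
    simp [idMat, Matrix.mul_assoc, hNinv]
  rw [hANN] at h ⊢
  have hP1 : P * G = G := hG1
  have hGNGd : N * (G * N * Gd)ᵀ = P := by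
    have := congrArg (fun X => X * N) hG3
    simpa [Matrix.mul_assoc, hNinv, hPdef] using this
  have hPsymm : Pᵀ = P := by
    rw [hPdef]
    rw [Matrix.transpose_mul, hNsy]
    exact hGNGd
  have hGT : Gᵀ = Aᵀ * A * N := by
    simp [hGdef, Matrix.transpose_mul, hNsy, Matrix.mul_assoc]
  have hF2 : (Aᵀ * A * N) * P = Aᵀ * A * N := by
    have := congrArg Matrix.transpose hP1
    rw [Matrix.transpose_mul, hPsymm, hGT] at this
    exact this
  have hAN : ∀ x : Fin n → ℝ, A *ᵥ (N *ᵥ x) = M *ᵥ (A *ᵥ x) := by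
    intro x
    rw [Matrix.mulVec_mulVec, ← hA, ← Matrix.mulVec_mulVec]
  have key : ∀ v : Fin n → ℝ, A *ᵥ (v - P *ᵥ v) = 0 := by
    intro v
    have h1 : Aᵀ *ᵥ (A *ᵥ (N *ᵥ (v - P *ᵥ v))) = 0 := by
      rw [Matrix.mulVec_mulVec, Matrix.mulVec_mulVec, Matrix.mulVec_sub,
        Matrix.mulVec_mulVec]
      rw [show Aᵀ * A * N * P = Aᵀ * A * N from hF2]
      simp
    have h2 : A *ᵥ (N *ᵥ (v - P *ᵥ v)) = 0 := aux_cancel A _ h1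
    rw [hAN] at h2
    have h3 := congrArg (fun x => M *ᵥ x) h2
    simpa [Matrix.mulVec_mulVec, ← Matrix.mul_assoc, hMinv] using h3
  intro w hw
  obtain ⟨hw1, -⟩ := hw
  have hu : (Gd * N) *ᵥ w ∈ K + {z : Fin n → ℝ | A *ᵥ z = 0} :=
    h ⟨w, hw1, rfl⟩
  rw [Set.mem_add] at hu
  obtain ⟨k, hk, z, hz, hkz⟩ := hu
  have hz' : A *ᵥ z = 0 := hz
  -- A *ᵥ ((G * N) *ᵥ z) = 0
  have hGNz : (G * N) *ᵥ z = 0 := by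
    have : (G * N) *ᵥ z = N *ᵥ (Aᵀ *ᵥ (A *ᵥ (N *ᵥ z))) := by
      simp [Matrix.mulVec_mulVec, hGdef, Matrix.mul_assoc]
    rw [this, hAN, hz']
    simp
  have hPw : P *ᵥ w = (G * N) *ᵥ k := by
    have : P *ᵥ w = (G * N) *ᵥ ((Gd * N) *ᵥ w) := by
      simp [Matrix.mulVec_mulVec, hPdef, Matrix.mul_assoc]
    rw [this, ← hkz, Matrix.mulVec_add, hGNz, add_zero]
  refine Set.mem_add.mpr ⟨(G * N) *ᵥ k, ⟨k, hk, rfl⟩, w - (G * N) *ᵥ k, ?_, by abel⟩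
  show A *ᵥ (w - (G * N) *ᵥ k) = 0
  rw [← hPw]
  exact key w
end

section
/- Let A be a real m×n matrix with M A = A N, with indefinite Moore–Penrose inverse A^[†], let G^[†] be the indefinite Moore–Penrose inverse of the Gram matrix A^[*]∘A, let K ⊆ ℝⁿ be a closed cone with A^[†]∘A∘K ⊆ K, and let I be the n×n identity. Then G^[†]∘K^[*] ⊆ K + 𝒩(A∘I) if and only if G^[†]∘K^[*] ⊆ K, where + denotes Minkowski sum. -/
open Matrix Pointwise

/-- Lemma 3.14: if `A^[†]∘A∘K ⊆ K`, then `(A^[*]∘A)^[†]∘K^[*] ⊆ K + 𝒩(A∘I)` if and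
only if `(A^[*]∘A)^[†]∘K^[*] ⊆ K`. Here `X = A^[†]`, `Gd = (A^[*]∘A)^[†]` is the
indefinite Moore–Penrose inverse (weight `N`) of the Gram matrix
`A^[*]∘A = (N Aᵀ M) M A`, and `+` is Minkowski sum. -/
theorem gram_pinv_cone_invariance_iff
    {m n : ℕ} (M : Matrix (Fin m) (Fin m) ℝ) (N : Matrix (Fin n) (Fin n) ℝ)
    (hMsymm : M.IsSymm) (hMinv : M * M = 1)
    (hNsymm : N.IsSymm) (hNinv : N * N = 1)
    (A : Matrix (Fin m) (Fin n) ℝ) (X : Matrix (Fin n) (Fin m) ℝ)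
    (hX1 : A * N * X * M * A = A)
    (hX2 : X * M * A * N * X = X)
    (hX3 : M * (A * N * X)ᵀ * M = A * N * X)
    (hX4 : N * (X * M * A)ᵀ * N = X * M * A)
    (Gd : Matrix (Fin n) (Fin n) ℝ)
    (hG1 : ((N * Aᵀ * M) * M * A) * N * Gd * N * ((N * Aᵀ * M) * M * A) = (N * Aᵀ * M) * M * A)
    (hG2 : Gd * N * ((N * Aᵀ * M) * M * A) * N * Gd = Gd)
    (hG3 : N * (((N * Aᵀ * M) * M * A) * N * Gd)ᵀ * N = ((N * Aᵀ * M) * M * A) * N * Gd)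
    (hG4 : N * (Gd * N * ((N * Aᵀ * M) * M * A))ᵀ * N = Gd * N * ((N * Aᵀ * M) * M * A))
    (hA : M * A = A * N)
    (K : Set (Fin n → ℝ)) (hKclosed : IsClosed K)
    (hKadd : ∀ x ∈ K, ∀ y ∈ K, x + y ∈ K)
    (hKsmul : ∀ x ∈ K, ∀ c : ℝ, 0 ≤ c → c • x ∈ K)
    (hinv : (fun x => ((X * M * A) * N) *ᵥ x) '' K ⊆ K) :
    (fun x => (Gd * N) *ᵥ x) '' {w : Fin n → ℝ | ∀ t ∈ K, 0 ≤ w ⬝ᵥ (N *ᵥ t)}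
        ⊆ K + {z : Fin n → ℝ | ((A * N * idMat n) * N) *ᵥ z = 0}
    ↔
    (fun x => (Gd * N) *ᵥ x) '' {w : Fin n → ℝ | ∀ t ∈ K, 0 ≤ w ⬝ᵥ (N *ᵥ t)} ⊆ K := by
  have hMt : Mᵀ = M := hMsymm
  have hNt : Nᵀ = N := hNsymm
  have hMM : ∀ {p : Type} (Z : Matrix (Fin m) p ℝ), M * (M * Z) = Z := fun Z => by
    rw [← Matrix.mul_assoc, hMinv, Matrix.one_mul]
  have hNN : ∀ {p : Type} (Z : Matrix (Fin n) p ℝ), N * (N * Z) = Z := fun Z => by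
    rw [← Matrix.mul_assoc, hNinv, Matrix.one_mul]
  have hAM : Aᵀ * M = N * Aᵀ := by
    have h := congrArg Matrix.transpose hA
    simpa [Matrix.transpose_mul, hMt, hNt] using h
  have fA' : ∀ {p : Type} (Z : Matrix (Fin n) p ℝ), M * (A * Z) = A * (N * Z) := fun Z => by
    rw [← Matrix.mul_assoc, hA, Matrix.mul_assoc]
  have fAT' : ∀ {p : Type} (Z : Matrix (Fin m) p ℝ), Aᵀ * (M * Z) = N * (Aᵀ * Z) := fun Z => by
    rw [← Matrix.mul_assoc, hAM, Matrix.mul_assoc]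
  simp only [Matrix.transpose_mul, Matrix.transpose_transpose, hMt, hNt,
    Matrix.mul_assoc, hMM, hNN] at hX1 hX4 hG2 hG4
  -- hX1 : A * (N * (X * (M * A))) = A
  -- hX4 : N * (Aᵀ * (M * (Xᵀ * N))) = X * (M * A)
  -- hG2 : Gd * (Aᵀ * (A * (N * Gd))) = Gd
  -- hG4 : N * (Aᵀ * (A * (Gdᵀ * N))) = Gd * (Aᵀ * A)
  have hX1' : M * (A * (X * (M * A))) = A := by rw [fA']; exact hX1
  have e1 : A * (X * (M * A)) = M * A := by
    have h := congrArg (fun Z => M * Z) hX1'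
    simpa [hMM] using h
  have key1 : A * (X * (M * (A * N))) = A := by
    have h := congrArg (fun Z => Z * N) e1
    simp only [Matrix.mul_assoc] at h
    rw [h, fA', hNinv, Matrix.mul_one]
  have key1T : N * (Aᵀ * (M * (Xᵀ * Aᵀ))) = Aᵀ := by
    have h := congrArg Matrix.transpose key1
    simpa [Matrix.transpose_mul, hMt, hNt, Matrix.mul_assoc] using h
  have key1T' : ∀ {p : Type} (Z : Matrix (Fin m) p ℝ),
      N * (Aᵀ * (M * (Xᵀ * (Aᵀ * Z)))) = Aᵀ * Z := fun Z => by
    have h := congrArg (fun W => W * Z) key1T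
    simpa [Matrix.mul_assoc] using h
  have hX4' : ∀ {p : Type} (Z : Matrix (Fin n) p ℝ),
      X * (M * (A * Z)) = N * (Aᵀ * (M * (Xᵀ * (N * Z)))) := fun Z => by
    have h := congrArg (fun W => W * Z) hX4
    simp only [Matrix.mul_assoc] at h
    exact h.symm
  have rep : N * (Aᵀ * (A * (Gdᵀ * Gd))) = Gd := by
    conv_rhs => rw [← hG2]
    rw [show Gd * (Aᵀ * (A * (N * Gd))) = (Gd * (Aᵀ * A)) * (N * Gd) by
      simp [Matrix.mul_assoc], ← hG4]
    simp [Matrix.mul_assoc, hNN]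
  have PGd : X * (M * (A * (N * Gd))) = Gd :=
    calc X * (M * (A * (N * Gd)))
        = X * (M * (A * (N * (N * (Aᵀ * (A * (Gdᵀ * Gd))))))) := by
          exact congrArg (fun W => X * (M * (A * (N * W)))) rep.symm
      _ = X * (M * (A * (Aᵀ * (A * (Gdᵀ * Gd))))) := by
          exact congrArg (fun W => X * (M * (A * W))) (hNN _)
      _ = N * (Aᵀ * (M * (Xᵀ * (N * (Aᵀ * (A * (Gdᵀ * Gd))))))) := hX4' _
      _ = N * (Aᵀ * (M * (Xᵀ * (Aᵀ * (M * (A * (Gdᵀ * Gd))))))) := by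
          exact congrArg (fun W => N * (Aᵀ * (M * (Xᵀ * W)))) (fAT' _).symm
      _ = Aᵀ * (M * (A * (Gdᵀ * Gd))) := key1T' _
      _ = N * (Aᵀ * (A * (Gdᵀ * Gd))) := fAT' _
      _ = Gd := rep
  have PGdN : (X * M * A * N) * (Gd * N) = Gd * N := by
    have h := congrArg (fun W => W * N) PGd
    simpa [Matrix.mul_assoc] using h
  have hPA : X * M * A * N = X * A := by
    rw [Matrix.mul_assoc (X * M) A N, ← hA, ← Matrix.mul_assoc,
      Matrix.mul_assoc X M M, hMinv, Matrix.mul_one]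
  constructor
  · intro h x hx
    obtain ⟨w, hw, rfl⟩ := hx
    have hx' := h ⟨w, hw, rfl⟩
    rw [Set.mem_add] at hx'
    obtain ⟨k, hk, z, hz, hsum⟩ := hx'
    have hsum' : k + z = (Gd * N) *ᵥ w := hsum
    have hAz : A *ᵥ z = 0 := by
      simpa [idMat, Matrix.mul_one, Matrix.mul_assoc, hNinv] using hz
    have Pz : ((X * M * A) * N) *ᵥ z = 0 := by
      rw [hPA, ← Matrix.mulVec_mulVec, hAz, Matrix.mulVec_zero]
    have hk' : ((X * M * A) * N) *ᵥ k ∈ K := hinv ⟨k, hk, rfl⟩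
    have heq : (Gd * N) *ᵥ w = ((X * M * A) * N) *ᵥ k := by
      calc (Gd * N) *ᵥ w = ((X * M * A * N) * (Gd * N)) *ᵥ w := by rw [PGdN]
        _ = ((X * M * A) * N) *ᵥ ((Gd * N) *ᵥ w) := by rw [← Matrix.mulVec_mulVec]
        _ = ((X * M * A) * N) *ᵥ (k + z) := by rw [← hsum']
        _ = ((X * M * A) * N) *ᵥ k + ((X * M * A) * N) *ᵥ z := Matrix.mulVec_add _ _ _
        _ = ((X * M * A) * N) *ᵥ k := by rw [Pz, add_zero]
    show (Gd * N) *ᵥ w ∈ K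
    rw [heq]; exact hk'
  · intro h x hx
    have hx' : x + 0 ∈ K + {z : Fin n → ℝ | ((A * N * idMat n) * N) *ᵥ z = 0} :=
      Set.add_mem_add (h hx) (by simp [Matrix.mulVec_zero])
    simpa using hx'
end
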